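/- arXiv:1310.7542 — 9 statements merged into one kernel-verified Lean document; each statement's English description precedes it below -/
import Mathlib

section
/- Let g(z) = c · ∏_{j=1}^n (z - z_j) be a polynomial of degree n with all z_j ≠ 0, such that sup_{|z|=1} |g(z)| ≥ 1. Let h(z) = ∏_{j=1}^n (z - ζ_j) where ζ_j = z_j/|z_j|. Then for every z with |z| = 1, |h(z)| ≤ 2^n |g(z)|. -/
/-!
On the unit circle each factor obeys `‖w - ζⱼ‖ (1 + ‖zⱼ‖) ≤ 2 ‖w - zⱼ‖`, so
`‖h w‖ ∏ (1 + ‖zⱼ‖) ≤ 2ⁿ ‖∏ (w - zⱼ)‖`; and the triangle inequality at a point where `‖g‖ ≥ 1`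
gives `1 ≤ ‖c‖ ∏ (1 + ‖zⱼ‖)`.
-/

open Complex Finset

/-- With `t = ⟪w, ζ⟫`, the squared inequality reduces to `0 ≤ (1 - r)² (1 + t)`. -/
theorem norm_sub_mul_one_add_le_two_mul_norm_sub_smul {E : Type*}
    [NormedAddCommGroup E] [InnerProductSpace ℝ E] {w ζ : E} (hw : ‖w‖ = 1) (hζ : ‖ζ‖ = 1)
    (r : ℝ) : ‖w - ζ‖ * (1 + r) ≤ 2 * ‖w - r • ζ‖ := by
  have ht : -1 ≤ inner ℝ w ζ := by
    simpa [hw, hζ] using neg_le_of_abs_le (abs_real_inner_le_norm w ζ)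
  have hsq : (‖w - ζ‖ * (1 + r)) ^ 2 ≤ (2 * ‖w - r • ζ‖) ^ 2 := by
    rw [mul_pow, mul_pow, norm_sub_sq_real, norm_sub_sq_real, real_inner_smul_right, norm_smul,
      hw, hζ, Real.norm_eq_abs, mul_one, sq_abs]
    nlinarith [mul_nonneg (sq_nonneg (1 - r)) (neg_le_iff_add_nonneg'.mp ht)]
  exact (abs_le_of_sq_le_sq' hsq (by positivity)).2

theorem norm_sub_radial_mul_one_add_norm_le {w : ℂ} (hw : ‖w‖ = 1) (z : ℂ) :
    ‖w - z / (‖z‖ : ℂ)‖ * (1 + ‖z‖) ≤ 2 * ‖w - z‖ := by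
  rcases eq_or_ne z 0 with rfl | hz
  · simp [hw]
  have hz' : (‖z‖ : ℂ) ≠ 0 := by exact_mod_cast norm_ne_zero_iff.mpr hz
  have hζ : ‖z / (‖z‖ : ℂ)‖ = 1 := by
    rw [norm_div, norm_real, norm_norm, div_self (norm_ne_zero_iff.mpr hz)]
  simpa [Complex.real_smul, mul_div_cancel₀ _ hz'] using
    norm_sub_mul_one_add_le_two_mul_norm_sub_smul hw hζ ‖z‖

theorem norm_prod_sub_le_prod_one_add {ι : Type*} [Fintype ι] {w : ℂ} (hw : ‖w‖ = 1)
    (z : ι → ℂ) : ‖∏ j, (w - z j)‖ ≤ ∏ j, (1 + ‖z j‖) := by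
  rw [norm_prod]
  gcongr with j
  exact hw ▸ norm_sub_le w (z j)

theorem norm_prod_sub_radial_mul_le {ι : Type*} [Fintype ι] {w : ℂ} (hw : ‖w‖ = 1)
    (z : ι → ℂ) :
    ‖∏ j, (w - z j / (‖z j‖ : ℂ))‖ * ∏ j, (1 + ‖z j‖)
      ≤ 2 ^ Fintype.card ι * ‖∏ j, (w - z j)‖ := by
  rw [norm_prod, norm_prod, ← prod_mul_distrib, ← card_univ, ← prod_const,
    ← prod_mul_distrib]
  exact prod_le_prod (fun j _ ↦ by positivity)
    fun j _ ↦ norm_sub_radial_mul_one_add_norm_le hw (z j)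

theorem stmt_1_general (n : ℕ) (c : ℂ) (z : Fin n → ℂ)
    (g h : ℂ → ℂ)
    (hg : ∀ w, g w = c * ∏ j, (w - z j))
    (hh : ∀ w, h w = ∏ j, (w - z j / (‖z j‖ : ℂ)))
    (hsup : ∃ w, ‖w‖ = 1 ∧ 1 ≤ ‖g w‖) :
    ∀ w, ‖w‖ = 1 → ‖h w‖ ≤ 2 ^ n * ‖g w‖ := by
  intro w hw
  obtain ⟨w₀, hw₀, hg₀⟩ := hsup
  have hcP : 1 ≤ ‖c‖ * ∏ j, (1 + ‖z j‖) := by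
    refine hg₀.trans ?_
    rw [hg, norm_mul]
    gcongr
    exact norm_prod_sub_le_prod_one_add hw₀ z
  have hkey := norm_prod_sub_radial_mul_le hw z
  rw [Fintype.card_fin] at hkey
  rw [hh, hg, norm_mul]
  calc ‖∏ j, (w - z j / (‖z j‖ : ℂ))‖
      ≤ ‖∏ j, (w - z j / (‖z j‖ : ℂ))‖ * (‖c‖ * ∏ j, (1 + ‖z j‖)) :=
        le_mul_of_one_le_right (norm_nonneg _) hcP
    _ = ‖c‖ * (‖∏ j, (w - z j / (‖z j‖ : ℂ))‖ * ∏ j, (1 + ‖z j‖)) := by ring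
    _ ≤ ‖c‖ * (2 ^ n * ‖∏ j, (w - z j)‖) := by gcongr
    _ = 2 ^ n * (‖c‖ * ‖∏ j, (w - z j)‖) := by ring

/-- Radial projection of zeros to the unit circle: if `g(z) = c·∏(z - zⱼ)` with all `zⱼ ≠ 0`
and `sup_{|z|=1} |g| ≥ 1`, and `h(z) = ∏(z - zⱼ/|zⱼ|)`, then `|h(z)| ≤ 2ⁿ|g(z)|` on `|z|=1`. -/
theorem stmt_1 (n : ℕ) (c : ℂ) (hc : c ≠ 0) (z : Fin n → ℂ) (hz : ∀ j, z j ≠ 0)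
    (g h : ℂ → ℂ)
    (hg : ∀ w, g w = c * ∏ j, (w - z j))
    (hh : ∀ w, h w = ∏ j, (w - z j / (‖z j‖ : ℂ)))
    (hsup : ∃ w, ‖w‖ = 1 ∧ 1 ≤ ‖g w‖) :
    ∀ w, ‖w‖ = 1 → ‖h w‖ ≤ 2 ^ n * ‖g w‖ :=
  stmt_1_general n c z g h hg hh hsup
end

section
/- Let E ⊂ Ω × 𝕋 be a measurable set, n ≥ 2 an integer, and suppose that for every t ∈ [0,1], Δ_t(E) := μ((E+t) \ E) < μ(E)/(2n), where E + t denotes the shift of E by t in the 𝕋 coordinate. Let Ω₁ = { ω ∈ Ω : m(E_ω) > 1 − 1/n }, where E_ω = {θ : (ω,θ) ∈ E}. Then 𝒫(Ω₁) > μ(E)/2. -/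
open MeasureTheory Set
open scoped ENNReal

/-! With `F ω = m(E_ω)`, Fubini and the invariance of `m` under `θ ↦ θ - t` and `θ ↦ -θ` show
that the average over `t` of `μ((E + t) \ E)` is `∫ F (1 - F) d𝒫`, so some shift gives
`∫ F (1 - F) < μ(E) / (2n)`. Off `Ω₁` we have `1 - F ≥ 1/n`, whence `∫_{Ω₁ᶜ} F < μ(E) / 2`,
while `∫_{Ω₁} F ≤ 𝒫(Ω₁)` because `F ≤ 1`; adding these and using `μ(E) = ∫ F` gives the claim. -/

section ShiftDifference

variable {G : Type*} [MeasurableSpace G] [AddGroup G] [MeasurableAdd₂ G] [MeasurableNeg G]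
  (ν : Measure G) [IsProbabilityMeasure ν] [ν.IsAddLeftInvariant] [ν.IsNegInvariant]

theorem lintegral_measure_preimage_sub_diff {A : Set G} (hA : MeasurableSet A) :
    ∫⁻ t, ν ((· - t) ⁻¹' A \ A) ∂ν = ν A * (1 - ν A) := by
  have hS : MeasurableSet {q : G × G | q.2 - q.1 ∈ A ∧ q.2 ∉ A} :=
    (hA.preimage (measurable_snd.sub measurable_fst)).inter (hA.compl.preimage measurable_snd)
  have hsection (θ : G) : ν {t | θ - t ∈ A ∧ θ ∉ A} = Aᶜ.indicator (fun _ => ν A) θ := by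
    by_cases hθ : θ ∈ A
    · simp [hθ]
    · rw [indicator_of_mem hθ]
      simp only [hθ, not_false_eq_true, and_true]
      exact (Measure.measurePreserving_sub_left ν θ).measure_preimage hA.nullMeasurableSet
  calc ∫⁻ t, ν ((· - t) ⁻¹' A \ A) ∂ν
      = (ν.prod ν) {q : G × G | q.2 - q.1 ∈ A ∧ q.2 ∉ A} := (Measure.prod_apply hS).symm
    _ = ∫⁻ θ, Aᶜ.indicator (fun _ => ν A) θ ∂ν := by
        rw [Measure.prod_apply_symm hS]; exact lintegral_congr hsection
    _ = ν A * (1 - ν A) := by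
        rw [lintegral_indicator_const hA.compl, prob_compl_eq_one_sub hA]

variable {Ω : Type*} [MeasurableSpace Ω] (P : Measure Ω) [SFinite P]

theorem lintegral_prod_measure_shift_diff {E : Set (Ω × G)} (hE : MeasurableSet E) :
    ∫⁻ t, (P.prod ν) ({p | (p.1, p.2 - t) ∈ E} \ E) ∂ν
      = ∫⁻ ω, ν (Prod.mk ω ⁻¹' E) * (1 - ν (Prod.mk ω ⁻¹' E)) ∂P := by
  have hS : MeasurableSet {q : (G × Ω) × G | (q.1.2, q.2 - q.1.1) ∈ E ∧ (q.1.2, q.2) ∉ E} :=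
    (hE.preimage (measurable_fst.snd.prodMk (measurable_snd.sub measurable_fst.fst))).inter
      (hE.compl.preimage (measurable_fst.snd.prodMk measurable_snd))
  have hshift (t : G) : MeasurableSet {p : Ω × G | (p.1, p.2 - t) ∈ E} :=
    hE.preimage (measurable_fst.prodMk (measurable_snd.sub_const t))
  calc ∫⁻ t, (P.prod ν) ({p | (p.1, p.2 - t) ∈ E} \ E) ∂ν
      = ∫⁻ t, ∫⁻ ω, ν ((· - t) ⁻¹' (Prod.mk ω ⁻¹' E) \ Prod.mk ω ⁻¹' E) ∂P ∂ν :=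
        lintegral_congr fun t => Measure.prod_apply ((hshift t).diff hE)
    _ = ∫⁻ ω, ∫⁻ t, ν ((· - t) ⁻¹' (Prod.mk ω ⁻¹' E) \ Prod.mk ω ⁻¹' E) ∂ν ∂P :=
        lintegral_lintegral_swap (measurable_measure_prodMk_left hS).aemeasurable
    _ = _ := lintegral_congr fun ω =>
        lintegral_measure_preimage_sub_diff ν (measurable_prodMk_left hE)

end ShiftDifference

theorem ENNReal.mul_le_mul_one_sub_of_le_one_sub {a c : ℝ≥0∞} (h : a ≤ 1 - c) :
    c * a ≤ a * (1 - a) := by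
  rcases eq_or_ne a 0 with rfl | ha
  · simp
  have hc : c < 1 := tsub_pos_iff_lt.mp ((pos_iff_ne_zero.mpr ha).trans_le h)
  have hac : a + c ≤ 1 := (ENNReal.le_sub_iff_add_le_right hc.ne_top hc.le).mp h
  have hca : c ≤ 1 - a :=
    ENNReal.le_sub_of_add_le_left (h.trans_lt (tsub_le_self.trans_lt ENNReal.one_lt_top)).ne hac
  rw [mul_comm]
  exact mul_le_mul_right hca a

theorem lintegral_div_two_lt_measure_of_lintegral_mul_one_sub_lt {Ω : Type*} [MeasurableSpace Ω]
    {P : Measure Ω} [IsFiniteMeasure P] {F : Ω → ℝ≥0∞} (hF : Measurable F) (hF1 : ∀ ω, F ω ≤ 1)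
    {c : ℝ≥0∞}
    (h : ∫⁻ ω, F ω * (1 - F ω) ∂P < c * ((∫⁻ ω, F ω ∂P) / 2)) :
    (∫⁻ ω, F ω ∂P) / 2 < P {ω | 1 - c < F ω} := by
  set A := {ω | 1 - c < F ω}
  have hA : MeasurableSet A := measurableSet_lt measurable_const hF
  have h_on : ∫⁻ ω in A, F ω ∂P ≤ P A := by
    calc ∫⁻ ω in A, F ω ∂P ≤ ∫⁻ _ in A, 1 ∂P := lintegral_mono hF1
      _ = P A := by simp
  have h_off : c * ∫⁻ ω in Aᶜ, F ω ∂P ≤ ∫⁻ ω, F ω * (1 - F ω) ∂P := by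
    rw [← lintegral_const_mul c hF]
    calc ∫⁻ ω in Aᶜ, c * F ω ∂P ≤ ∫⁻ ω in Aᶜ, F ω * (1 - F ω) ∂P :=
          setLIntegral_mono' hA.compl fun ω hω =>
            ENNReal.mul_le_mul_one_sub_of_le_one_sub (not_lt.mp hω)
      _ ≤ ∫⁻ ω, F ω * (1 - F ω) ∂P := setLIntegral_le_lintegral _ _
  have h_off' : ∫⁻ ω in Aᶜ, F ω ∂P < (∫⁻ ω, F ω ∂P) / 2 :=
    lt_of_mul_lt_mul_left (h_off.trans_lt h) bot_le
  refine lt_of_add_lt_add_right (a := (∫⁻ ω, F ω ∂P) / 2) ?_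
  calc (∫⁻ ω, F ω ∂P) / 2 + (∫⁻ ω, F ω ∂P) / 2 = ∫⁻ ω, F ω ∂P := ENNReal.add_halves _
    _ = ∫⁻ ω in A, F ω ∂P + ∫⁻ ω in Aᶜ, F ω ∂P := (lintegral_add_compl F hA).symm
    _ < P A + (∫⁻ ω, F ω ∂P) / 2 :=
        ENNReal.add_lt_add_of_le_of_lt (h_on.trans_lt (measure_lt_top P A)).ne h_on h_off'

theorem stmt_5_general {Ω : Type*} [MeasureSpace Ω] [IsProbabilityMeasure (volume : Measure Ω)]
    (E : Set (Ω × AddCircle (1 : ℝ))) (hE : MeasurableSet E)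
    (n : ℕ)
    (hshift : ∀ t : AddCircle (1 : ℝ),
      volume ({p : Ω × AddCircle (1 : ℝ) | (p.1, p.2 - t) ∈ E} \ E)
        < volume E / (2 * n)) :
    volume E / 2
      < volume {ω : Ω |
          1 - 1 / (n : ENNReal) < volume {θ : AddCircle (1 : ℝ) | (ω, θ) ∈ E}} := by
  have : IsProbabilityMeasure (volume : Measure (AddCircle (1 : ℝ))) :=
    ⟨by simp [AddCircle.measure_univ]⟩
  have hvolume : volume E = ∫⁻ ω, volume (Prod.mk ω ⁻¹' E) := by
    rw [Measure.volume_eq_prod, Measure.prod_apply hE]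
  have haverage_ne_top : ∫⁻ t : AddCircle (1 : ℝ),
      volume ({p : Ω × AddCircle (1 : ℝ) | (p.1, p.2 - t) ∈ E} \ E) ≠ ∞ :=
    ((lintegral_mono fun _ => prob_le_one).trans_lt (by simp)).ne
  obtain ⟨t, ht⟩ := exists_lintegral_le haverage_ne_top
  have hsmall : ∫⁻ ω, volume (Prod.mk ω ⁻¹' E) * (1 - volume (Prod.mk ω ⁻¹' E))
      < 1 / n * (volume E / 2) :=
    calc ∫⁻ ω, volume (Prod.mk ω ⁻¹' E) * (1 - volume (Prod.mk ω ⁻¹' E))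
        = ∫⁻ s : AddCircle (1 : ℝ), volume ({p : Ω × AddCircle (1 : ℝ) | (p.1, p.2 - s) ∈ E} \ E) :=
          (lintegral_prod_measure_shift_diff volume volume hE).symm
      _ ≤ volume ({p : Ω × AddCircle (1 : ℝ) | (p.1, p.2 - t) ∈ E} \ E) := ht
      _ < volume E / (2 * n) := hshift t
      _ = 1 / n * (volume E / 2) := by
        rw [div_eq_mul_inv, ENNReal.mul_inv (Or.inl two_ne_zero) (Or.inl ENNReal.ofNat_ne_top),
          one_div, div_eq_mul_inv]
        ring
  rw [hvolume] at hsmall ⊢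
  exact lintegral_div_two_lt_measure_of_lintegral_mul_one_sub_lt
    (measurable_measure_prodMk_left hE) (fun _ => prob_le_one) hsmall

/-- If `E ⊂ Ω × 𝕋` satisfies `μ((E+t)\E) < μ(E)/(2n)` for every shift `t`, then the set
`Ω₁` of `ω` with long sections `m(E_ω) > 1 - 1/n` has probability `> μ(E)/2`. -/
theorem stmt_5 {Ω : Type*} [MeasureSpace Ω] [IsProbabilityMeasure (volume : Measure Ω)]
    (E : Set (Ω × AddCircle (1 : ℝ))) (hE : MeasurableSet E)
    (n : ℕ) (hn : 2 ≤ n)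
    (hshift : ∀ t : AddCircle (1 : ℝ),
      volume ({p : Ω × AddCircle (1 : ℝ) | (p.1, p.2 - t) ∈ E} \ E)
        < volume E / (2 * n)) :
    volume E / 2
      < volume {ω : Ω |
          1 - 1 / (n : ENNReal) < volume {θ : AddCircle (1 : ℝ) | (ω, θ) ∈ E}} :=
  stmt_5_general E hE n hshift
end

section
/- Let D = ∏_{j=1}^n e^{2πiλ_j x} (d/dx) e^{−2πiλ_j x} be a differential operator of order n ≥ 1 with distinct real frequencies λ_1,…,λ_n, and let J ⊂ [0,1] be an interval. Suppose f : J → ℂ is a C^n function satisfying Df = h with h integrable on J. Then there exists an exponential polynomial p(x) = Σ_{j=1}^n c_j e^{2πiλ_j x} such that sup_{x∈J} |f(x) − p(x)| ≤ m(J)^n · (1/m(J)) ∫_J |h(x)| dx. -/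
/-!
Since `e^{wx} (d/dx) (e^{-wx} g) = g' - w g`, the operator `D` factors as `∏ⱼ (d/dx - wⱼ)` with
`wⱼ = 2πiλⱼ` purely imaginary. Each factor is inverted, up to a multiple of `e^{wⱼx}`, by the
fundamental theorem of calculus applied to `e^{-wⱼx} g`; as `|e^{wⱼx}| = 1` this costs nothing
beyond the length of `J`. Peeling off the outermost factor gives `D' f = c₀ e^{w₀x} + O(∫_J |h|)`
for the remaining product `D'`. Since `w₀` differs from the other frequencies, `e^{w₀x}` is an
eigenfunction of `D'` with nonzero eigenvalue, so subtracting a multiple of it from `f` leaves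
an equation of order `n - 1` with uniformly bounded right-hand side, handled by induction.
-/

open Complex MeasureTheory Set Filter Topology

noncomputable section

def twistedDeriv (w : ℂ) (g : ℝ → ℂ) (x : ℝ) : ℂ :=
  exp (w * x) * deriv (fun y : ℝ => exp (-(w * y)) * g y) x

def twistedDerivComp (ws : List ℂ) : (ℝ → ℂ) → ℝ → ℂ :=
  (ws.map twistedDeriv).foldr (· ∘ ·) id

def expPoly (ws : List ℂ) (c : ℂ → ℂ) (x : ℝ) : ℂ :=
  (ws.map fun w => c w * exp (w * x)).sum

@[simp]
lemma twistedDerivComp_nil (g : ℝ → ℂ) : twistedDerivComp [] g = g := rfl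

@[simp]
lemma twistedDerivComp_cons (w : ℂ) (ws : List ℂ) (g : ℝ → ℂ) :
    twistedDerivComp (w :: ws) g = twistedDeriv w (twistedDerivComp ws g) := rfl

lemma hasDerivAt_exp_mul_ofReal (w : ℂ) (x : ℝ) :
    HasDerivAt (fun y : ℝ => exp (w * y)) (w * exp (w * x)) x := by
  simpa [mul_comm] using ((hasDerivAt_id x).ofReal_comp.const_mul w).cexp

lemma contDiff_exp_mul_ofReal (w : ℂ) {n : WithTop ℕ∞} :
    ContDiff ℝ n fun y : ℝ => exp (w * y) :=
  (contDiff_const.mul ofRealCLM.contDiff).cexp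

lemma norm_exp_mul_ofReal {w : ℂ} (hw : w.re = 0) (x : ℝ) : ‖exp (w * x)‖ = 1 := by
  simp [norm_exp, hw]

lemma hasDerivAt_exp_neg_mul_mul {w : ℂ} {g : ℝ → ℂ} {g' : ℂ} {x : ℝ} (hg : HasDerivAt g g' x) :
    HasDerivAt (fun y : ℝ => exp (-(w * y)) * g y) (exp (-(w * x)) * (g' - w * g x)) x := by
  have he := hasDerivAt_exp_mul_ofReal (-w) x
  simp only [neg_mul] at he
  exact (he.mul hg).congr_deriv (by ring)

lemma twistedDeriv_eq {w : ℂ} {g : ℝ → ℂ} {x : ℝ} (hg : DifferentiableAt ℝ g x) :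
    twistedDeriv w g x = deriv g x - w * g x := by
  rw [twistedDeriv, (hasDerivAt_exp_neg_mul_mul hg.hasDerivAt).deriv, ← mul_assoc, ← exp_add,
    add_neg_cancel, exp_zero, one_mul]

lemma hasDerivAt_exp_neg_mul_mul_twistedDeriv {w : ℂ} {g : ℝ → ℂ} {x : ℝ}
    (hg : DifferentiableAt ℝ g x) :
    HasDerivAt (fun y : ℝ => exp (-(w * y)) * g y) (exp (-(w * x)) * twistedDeriv w g x) x := by
  rw [twistedDeriv_eq hg]
  exact hasDerivAt_exp_neg_mul_mul hg.hasDerivAt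

lemma twistedDeriv_congr {w : ℂ} {g₁ g₂ : ℝ → ℂ} {x : ℝ} (h : g₁ =ᶠ[𝓝 x] g₂) :
    twistedDeriv w g₁ x = twistedDeriv w g₂ x := by
  rw [twistedDeriv, twistedDeriv, Filter.EventuallyEq.deriv_eq]
  filter_upwards [h] with y hy
  rw [hy]

lemma twistedDeriv_sub {w : ℂ} {g₁ g₂ : ℝ → ℂ} {x : ℝ} (h₁ : DifferentiableAt ℝ g₁ x)
    (h₂ : DifferentiableAt ℝ g₂ x) :
    twistedDeriv w (g₁ - g₂) x = twistedDeriv w g₁ x - twistedDeriv w g₂ x := by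
  rw [twistedDeriv_eq (h₁.sub h₂), twistedDeriv_eq h₁, twistedDeriv_eq h₂, deriv_sub h₁ h₂]
  simp only [Pi.sub_apply]
  ring

lemma twistedDeriv_const_mul_exp (w v A : ℂ) (x : ℝ) :
    twistedDeriv w (fun y : ℝ => A * exp (v * y)) x = (v - w) * A * exp (v * x) := by
  have hd := (hasDerivAt_exp_mul_ofReal v x).const_mul A
  rw [twistedDeriv_eq hd.differentiableAt, hd.deriv]
  ring

lemma ContDiffOn.twistedDeriv {w : ℂ} {g : ℝ → ℂ} {s : Set ℝ} (hs : IsOpen s) {k : ℕ}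
    (hg : ContDiffOn ℝ (k + 1 : ℕ) g s) : ContDiffOn ℝ k (twistedDeriv w g) s := by
  have hdiff : ∀ x ∈ s, DifferentiableAt ℝ g x := fun x hx =>
    (hg.differentiableOn (by simp)).differentiableAt (hs.mem_nhds hx)
  refine ((hg.deriv_of_isOpen hs (by simp)).sub (contDiffOn_const.mul (hg.of_le ?_))).congr
    fun x hx => twistedDeriv_eq (hdiff x hx)
  exact_mod_cast k.le_succ

lemma ContDiffOn.twistedDerivComp {s : Set ℝ} (hs : IsOpen s) (ws : List ℂ) :
    ∀ {k : ℕ} {g : ℝ → ℂ}, ContDiffOn ℝ (ws.length + k : ℕ) g s →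
      ContDiffOn ℝ k (twistedDerivComp ws g) s := by
  induction ws with
  | nil => intro k g hg; simpa using hg
  | cons w ws ih =>
    intro k g hg
    refine (ih (k := k + 1) ?_).twistedDeriv hs
    simpa [add_assoc, add_comm 1 k] using hg

lemma differentiableAt_twistedDerivComp {s : Set ℝ} (hs : IsOpen s) {ws : List ℂ} {g : ℝ → ℂ}
    (hg : ContDiffOn ℝ (ws.length + 1 : ℕ) g s) {x : ℝ} (hx : x ∈ s) :
    DifferentiableAt ℝ (twistedDerivComp ws g) x :=
  ((hg.twistedDerivComp hs ws (k := 1)).differentiableOn (by simp)).differentiableAt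
    (hs.mem_nhds hx)

lemma twistedDerivComp_const_mul_exp (ws : List ℂ) (v A : ℂ) (x : ℝ) :
    twistedDerivComp ws (fun y : ℝ => A * exp (v * y)) x =
      (ws.map (v - ·)).prod * A * exp (v * x) := by
  induction ws generalizing x with
  | nil => simp
  | cons w ws ih =>
    rw [twistedDerivComp_cons, funext ih, List.map_cons, List.prod_cons,
      twistedDeriv_const_mul_exp]
    ring

lemma twistedDerivComp_sub {s : Set ℝ} (hs : IsOpen s) (ws : List ℂ) :
    ∀ {g₁ g₂ : ℝ → ℂ}, ContDiffOn ℝ ws.length g₁ s → ContDiffOn ℝ ws.length g₂ s →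
      ∀ x ∈ s, twistedDerivComp ws (g₁ - g₂) x =
        twistedDerivComp ws g₁ x - twistedDerivComp ws g₂ x := by
  induction ws with
  | nil => simp
  | cons w ws ih =>
    intro g₁ g₂ h₁ h₂ x hx
    have hle : ((ws.length : ℕ) : WithTop ℕ∞) ≤ (w :: ws).length := by
      exact_mod_cast ws.length.le_succ
    have hcongr : twistedDerivComp ws (g₁ - g₂) =ᶠ[𝓝 x]
        twistedDerivComp ws g₁ - twistedDerivComp ws g₂ :=
      eventually_of_mem (hs.mem_nhds hx) (ih (h₁.of_le hle) (h₂.of_le hle))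
    rw [twistedDerivComp_cons, twistedDeriv_congr hcongr, twistedDeriv_sub
      (differentiableAt_twistedDerivComp hs h₁ hx) (differentiableAt_twistedDerivComp hs h₂ hx)]
    rfl

lemma exists_twistedDerivComp_const_mul_exp_eq {v : ℂ} {ws : List ℂ} (hv : v ∉ ws) (c₀ : ℂ) :
    ∃ A : ℂ, ∀ x : ℝ, twistedDerivComp ws (fun y : ℝ => A * exp (v * y)) x = c₀ * exp (v * x) := by
  have hK : (ws.map (v - ·)).prod ≠ 0 := List.prod_ne_zero fun h₀ => by
    obtain ⟨w, hw, hvw⟩ := List.mem_map.mp h₀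
    exact hv (sub_eq_zero.mp hvw ▸ hw)
  refine ⟨c₀ / (ws.map (v - ·)).prod, fun x => ?_⟩
  rw [twistedDerivComp_const_mul_exp, mul_div_cancel₀ _ hK]

lemma expPoly_cons_update {v : ℂ} {ws : List ℂ} (hv : v ∉ ws) (c : ℂ → ℂ) (A : ℂ) (x : ℝ) :
    expPoly (v :: ws) (Function.update c v A) x = A * exp (v * x) + expPoly ws c x := by
  rw [expPoly, List.map_cons, List.sum_cons, Function.update_self, expPoly]
  congr 2
  refine List.map_congr_left fun w hw => ?_
  rw [Function.update_of_ne (ne_of_mem_of_not_mem hw hv)]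

lemma norm_sub_mul_exp_eq {w : ℂ} (hw : w.re = 0) (g : ℝ → ℂ) (x t : ℝ) :
    ‖g x - exp (-(w * t)) * g t * exp (w * x)‖ =
      ‖exp (-(w * x)) * g x - exp (-(w * t)) * g t‖ := by
  have hfactor : g x - exp (-(w * t)) * g t * exp (w * x) =
      exp (w * x) * (exp (-(w * x)) * g x - exp (-(w * t)) * g t) := by
    rw [mul_sub, ← mul_assoc, ← exp_add, add_neg_cancel, exp_zero, one_mul]
    ring
  rw [hfactor, norm_mul, norm_exp_mul_ofReal hw, one_mul]

lemma exists_norm_sub_mul_exp_le_integral {w : ℂ} (hw : w.re = 0) {g h : ℝ → ℂ} {a b : ℝ}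
    (hg : ∀ x ∈ Ioo a b, DifferentiableAt ℝ g x) (hh : IntegrableOn h (Icc a b))
    (heq : ∀ x ∈ Ioo a b, twistedDeriv w g x = h x) :
    ∃ c : ℂ, ∀ x ∈ Ioo a b, ‖g x - c * exp (w * x)‖ ≤ ∫ y in Icc a b, ‖h y‖ := by
  rcases (Ioo a b).eq_empty_or_nonempty with hE | ⟨t, ht⟩
  · exact ⟨0, by simp [hE]⟩
  refine ⟨exp (-(w * t)) * g t, fun x hx => ?_⟩
  have hsub : uIcc t x ⊆ Ioo a b := ordConnected_Ioo.uIcc_subset ht hx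
  have hsub' : uIcc t x ⊆ Icc a b := hsub.trans Ioo_subset_Icc_self
  have hint : IntervalIntegrable (fun y : ℝ => exp (-(w * y)) * h y) volume t x :=
    ((hh.mono_set hsub').continuousOn_mul (by fun_prop) isCompact_uIcc).intervalIntegrable
  have hFTC : ∫ y in t..x, exp (-(w * y)) * h y =
      exp (-(w * x)) * g x - exp (-(w * t)) * g t :=
    intervalIntegral.integral_eq_sub_of_hasDerivAt (fun y hy => heq y (hsub hy) ▸
      hasDerivAt_exp_neg_mul_mul_twistedDeriv (hg y (hsub hy))) hint
  rw [norm_sub_mul_exp_eq hw, ← hFTC]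
  calc ‖∫ y in t..x, exp (-(w * y)) * h y‖
      ≤ ∫ y in uIoc t x, ‖exp (-(w * y)) * h y‖ :=
        intervalIntegral.norm_integral_le_integral_norm_uIoc
    _ = ∫ y in uIoc t x, ‖h y‖ := by simp [norm_exp, hw]
    _ ≤ ∫ y in Icc a b, ‖h y‖ := setIntegral_mono_set hh.norm
        (.of_forall fun _ => norm_nonneg _) (uIoc_subset_uIcc.trans hsub').eventuallyLE

lemma exists_norm_sub_mul_exp_le {w : ℂ} (hw : w.re = 0) {g : ℝ → ℂ} {a b M : ℝ}
    (hg : ∀ x ∈ Ioo a b, DifferentiableAt ℝ g x) (hM : ∀ x ∈ Ioo a b, ‖twistedDeriv w g x‖ ≤ M) :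
    ∃ c : ℂ, ∀ x ∈ Ioo a b, ‖g x - c * exp (w * x)‖ ≤ M * (b - a) := by
  rcases (Ioo a b).eq_empty_or_nonempty with hE | ⟨t, ht⟩
  · exact ⟨0, by simp [hE]⟩
  refine ⟨exp (-(w * t)) * g t, fun x hx => ?_⟩
  rw [norm_sub_mul_exp_eq hw]
  calc _ ≤ M * ‖x - t‖ :=
        (convex_Ioo a b).norm_image_sub_le_of_norm_hasDerivWithin_le
          (fun y hy => (hasDerivAt_exp_neg_mul_mul_twistedDeriv (hg y hy)).hasDerivWithinAt)
          (fun y hy => by simpa [norm_exp, hw] using hM y hy) ht hx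
    _ ≤ M * (b - a) := by
        rw [← dist_eq_norm]
        exact mul_le_mul_of_nonneg_left
          (Real.dist_le_of_mem_Icc (Ioo_subset_Icc_self hx) (Ioo_subset_Icc_self ht))
          ((norm_nonneg _).trans (hM t ht))

lemma exists_norm_sub_expPoly_cons_le {s : Set ℝ} (hs : IsOpen s) {v : ℂ} {ws : List ℂ}
    (hv : v ∉ ws) {f : ℝ → ℂ} (hf : ContDiffOn ℝ ws.length f s) {c₀ : ℂ} {M E : ℝ}
    (h₀ : ∀ x ∈ s, ‖twistedDerivComp ws f x - c₀ * exp (v * x)‖ ≤ M)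
    (ih : ∀ g : ℝ → ℂ, ContDiffOn ℝ ws.length g s → (∀ x ∈ s, ‖twistedDerivComp ws g x‖ ≤ M) →
      ∃ c : ℂ → ℂ, ∀ x ∈ s, ‖g x - expPoly ws c x‖ ≤ E) :
    ∃ c : ℂ → ℂ, ∀ x ∈ s, ‖f x - expPoly (v :: ws) c x‖ ≤ E := by
  obtain ⟨A, hA⟩ := exists_twistedDerivComp_const_mul_exp_eq hv c₀
  have he : ContDiffOn ℝ ws.length (fun y : ℝ => A * exp (v * y)) s :=
    (contDiff_const.mul (contDiff_exp_mul_ofReal v)).contDiffOn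
  obtain ⟨c, hc⟩ := ih (f - fun y : ℝ => A * exp (v * y)) (hf.sub he) fun x hx => by
    rw [twistedDerivComp_sub hs ws hf he x hx, hA]
    exact h₀ x hx
  refine ⟨Function.update c v A, fun x hx => ?_⟩
  rw [expPoly_cons_update hv, ← sub_sub]
  exact hc x hx

theorem exists_norm_sub_expPoly_le {a b : ℝ} {ws : List ℂ} (hnd : ws.Nodup)
    (hre : ∀ w ∈ ws, w.re = 0) {f : ℝ → ℂ} {M : ℝ} (hf : ContDiffOn ℝ ws.length f (Ioo a b))
    (hM : ∀ x ∈ Ioo a b, ‖twistedDerivComp ws f x‖ ≤ M) :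
    ∃ c : ℂ → ℂ, ∀ x ∈ Ioo a b, ‖f x - expPoly ws c x‖ ≤ M * (b - a) ^ ws.length := by
  induction ws generalizing f M with
  | nil => exact ⟨0, fun x hx => by simpa [expPoly] using hM x hx⟩
  | cons v ws ih =>
    obtain ⟨hv, hnd⟩ := List.nodup_cons.mp hnd
    obtain ⟨c₀, hc₀⟩ := exists_norm_sub_mul_exp_le (hre v List.mem_cons_self)
      (fun x hx => differentiableAt_twistedDerivComp isOpen_Ioo hf hx) hM
    obtain ⟨c, hc⟩ := exists_norm_sub_expPoly_cons_le isOpen_Ioo hv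
      (hf.of_le (by exact_mod_cast ws.length.le_succ)) hc₀ fun g hg hgM =>
        ih hnd (fun w hw => hre w (List.mem_cons_of_mem v hw)) hg hgM
    exact ⟨c, fun x hx => (hc x hx).trans_eq (by rw [List.length_cons, pow_succ]; ring)⟩

theorem exists_norm_sub_expPoly_le_integral {a b : ℝ} {v : ℂ} {ws : List ℂ}
    (hnd : (v :: ws).Nodup) (hre : ∀ w ∈ v :: ws, w.re = 0) {f h : ℝ → ℂ}
    (hf : ContDiffOn ℝ (v :: ws).length f (Ioo a b)) (hh : IntegrableOn h (Icc a b))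
    (heq : ∀ x ∈ Ioo a b, twistedDerivComp (v :: ws) f x = h x) :
    ∃ c : ℂ → ℂ, ∀ x ∈ Ioo a b,
      ‖f x - expPoly (v :: ws) c x‖ ≤ (∫ y in Icc a b, ‖h y‖) * (b - a) ^ ws.length := by
  obtain ⟨hv, hnd⟩ := List.nodup_cons.mp hnd
  obtain ⟨c₀, hc₀⟩ := exists_norm_sub_mul_exp_le_integral (hre v List.mem_cons_self)
    (fun x hx => differentiableAt_twistedDerivComp isOpen_Ioo hf hx) hh heq
  exact exists_norm_sub_expPoly_cons_le isOpen_Ioo hv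
    (hf.of_le (by exact_mod_cast ws.length.le_succ)) hc₀ fun g hg hgM =>
      exists_norm_sub_expPoly_le hnd (fun w hw => hre w (List.mem_cons_of_mem v hw)) hg hgM

lemma expPoly_ofFn {n : ℕ} (w : Fin n → ℂ) (c : ℂ → ℂ) (x : ℝ) :
    expPoly (List.ofFn w) c x = ∑ j, c (w j) * exp (w j * x) := by
  simp [expPoly, List.map_ofFn, List.sum_ofFn]

end

theorem stmt_6_general (n : ℕ) (hn : 1 ≤ n) (lam : Fin n → ℝ) (hlam : Function.Injective lam)
    (a b : ℝ) (hab : a < b)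
    (f h : ℝ → ℂ)
    (hf : ContDiffOn ℝ n f (Set.Icc a b))
    (hint : IntegrableOn h (Set.Icc a b))
    (D : (ℝ → ℂ) → (ℝ → ℂ))
    (hD : D = (List.ofFn fun j : Fin n => fun (g : ℝ → ℂ) (x : ℝ) =>
        Complex.exp (2 * Real.pi * Complex.I * (lam j : ℂ) * (x : ℂ)) *
          deriv (fun y : ℝ =>
            Complex.exp (-(2 * Real.pi * Complex.I * (lam j : ℂ) * (y : ℂ))) * g y) x).foldr
        (· ∘ ·) id)
    (heq : ∀ x ∈ Set.Icc a b, D f x = h x) :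
    ∃ c : Fin n → ℂ, ∀ x ∈ Set.Icc a b,
      ‖f x
          - ∑ j, c j * Complex.exp (2 * Real.pi * Complex.I * (lam j : ℂ) * (x : ℂ))‖
        ≤ (b - a) ^ n * ((b - a)⁻¹ * ∫ y in Set.Icc a b, ‖h y‖) := by
  set w : Fin n → ℂ := fun j => 2 * Real.pi * I * lam j
  have hDw : D = twistedDerivComp (List.ofFn w) := by
    rw [hD, twistedDerivComp, List.map_ofFn]
    rfl
  have hnd : (List.ofFn w).Nodup :=
    List.nodup_ofFn.mpr fun j k hjk => hlam (by simpa [w, Real.pi_ne_zero] using hjk)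
  have hre : ∀ z ∈ List.ofFn w, z.re = 0 := by simp [w]
  obtain ⟨v, ws, hws⟩ := List.exists_cons_of_ne_nil (by simp; omega : List.ofFn w ≠ [])
  have hlen : n = ws.length + 1 := by simpa using congrArg List.length hws
  obtain ⟨c, hc⟩ := exists_norm_sub_expPoly_le_integral (hws ▸ hnd) (hws ▸ hre)
    (by rw [← hws, List.length_ofFn]; exact hf.mono Ioo_subset_Icc_self) hint
    (fun x hx => by rw [← hws, ← hDw]; exact heq x (Ioo_subset_Icc_self hx))
  refine ⟨fun j => c (w j), fun x hx => ?_⟩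
  have hcont : ContinuousOn (fun y => ‖f y - ∑ j, c (w j) * exp (w j * y)‖) (Icc a b) :=
    (hf.continuousOn.sub (by fun_prop)).norm
  have hbound : (b - a) ^ n * ((b - a)⁻¹ * ∫ y in Icc a b, ‖h y‖) =
      (∫ y in Icc a b, ‖h y‖) * (b - a) ^ ws.length := by
    rw [hlen, pow_succ]
    field_simp [(sub_pos.mpr hab).ne']
  rw [hbound]
  -- `D f` is a genuine derivative only on the open interval; the endpoints follow by continuity.
  refine ContinuousWithinAt.closure_le (by rwa [closure_Ioo hab.ne]) ((hcont x hx).mono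
    Ioo_subset_Icc_self) continuousWithinAt_const fun y hy => ?_
  rw [← expPoly_ofFn, hws]
  exact hc y hy

/-- Approximation by solutions of the homogeneous equation: if `Df = h` on an interval
`J ⊆ [0,1]`, where `D = ∏_j e^{2πiλ_j x}(d/dx)e^{-2πiλ_j x}` with distinct real
frequencies, then there is an exponential polynomial `p = Σ c_j e^{2πiλ_j x}` with
`sup_J |f - p| ≤ m(J)^n · (1/m(J)) ∫_J |h|`. -/
theorem stmt_6 (n : ℕ) (hn : 1 ≤ n) (lam : Fin n → ℝ) (hlam : Function.Injective lam)
    (a b : ℝ) (hab : a < b) (ha : 0 ≤ a) (hb : b ≤ 1)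
    (f h : ℝ → ℂ)
    (hf : ContDiffOn ℝ n f (Set.Icc a b))
    (hint : IntegrableOn h (Set.Icc a b))
    (D : (ℝ → ℂ) → (ℝ → ℂ))
    (hD : D = (List.ofFn fun j : Fin n => fun (g : ℝ → ℂ) (x : ℝ) =>
        Complex.exp (2 * Real.pi * Complex.I * (lam j : ℂ) * (x : ℂ)) *
          deriv (fun y : ℝ =>
            Complex.exp (-(2 * Real.pi * Complex.I * (lam j : ℂ) * (y : ℂ))) * g y) x).foldr
        (· ∘ ·) id)
    (heq : ∀ x ∈ Set.Icc a b, D f x = h x) :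
    ∃ c : Fin n → ℂ, ∀ x ∈ Set.Icc a b,
      ‖f x
          - ∑ j, c j * Complex.exp (2 * Real.pi * Complex.I * (lam j : ℂ) * (x : ℂ))‖
        ≤ (b - a) ^ n * ((b - a)⁻¹ * ∫ y in Set.Icc a b, ‖h y‖) :=
  stmt_6_general n hn lam hlam a b hab f h hf hint D hD heq
end

section
/- Let b > 1, let Φ : [1,∞) → (1,∞) be continuous non-decreasing with Φ(r) → ∞, and let ε : [1,∞) → (0,1] be continuous non-increasing. Define E = { r ∈ [1,∞) : Φ(r + r·ε(r)·(log Φ(r))^{−b}) ≥ (1 + ε(r))·Φ(r) }. Then E has finite logarithmic measure, i.e. ∫_E dr/r < ∞. -/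
/-!
In the variable `s = log r` the logarithmic measure becomes Lebesgue measure. With
`u(r) = log Φ(r)` and `ρ(s) = log (1 + ε(r) u(r)^{-b})`, every `s = log r` with `r ∈ E` satisfies
`c ρ(s) ≤ ψ(s + ρ(s)) - ψ(s)` for the bounded nondecreasing function `ψ(s) = -u(e^s)^{1-b}` and a
constant `c > 0`: on `[r, r e^{ρ(s)}]` the function `u` grows by `log (1 + ε) ≥ ε / 2`, while
`ρ(s) ≤ ε u^{-b}`. A Vitali covering by the balls `B(s, ρ(s))` then bounds the measure of the
`s`-set by a multiple of the total mass of the Stieltjes measure of `ψ`.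
-/

open Real Filter Set MeasureTheory Metric

theorem volume_lt_top_of_mul_le_measureReal_closedBall {ν : Measure ℝ} [IsFiniteMeasure ν]
    {S : Set ℝ} {ρ : ℝ → ℝ} {c : ℝ} (hc : 0 < c) (hρ : ∀ a ∈ S, 0 < ρ a)
    (hν : ∀ a ∈ S, c * ρ a ≤ ν.real (closedBall a (ρ a))) : volume S < ⊤ := by
  have hR : ∀ a ∈ S, ρ a ≤ ν.real univ / c := fun a ha => by
    rw [le_div_iff₀' hc]
    exact (hν a ha).trans (measureReal_mono (subset_univ _))
  obtain ⟨U, hUS, hUdisj, hUcov⟩ :=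
    Vitali.exists_disjoint_subfamily_covering_enlargement_closedBall S id ρ _ hR 5 (by norm_num)
  have hU : U.Countable := hUdisj.countable_of_nonempty_interior fun x hx =>
    ⟨x, ball_subset_interior_closedBall (mem_ball_self (hρ x (hUS hx)))⟩
  have hcover : S ⊆ ⋃ x ∈ U, closedBall x (5 * ρ x) := fun a ha => by
    obtain ⟨x, hxU, hsub⟩ := hUcov a ha
    exact mem_biUnion hxU (hsub (mem_closedBall_self (hρ a ha).le))
  calc volume S ≤ ∑' x : U, volume (closedBall (x : ℝ) (5 * ρ x)) :=
        (measure_mono hcover).trans (measure_biUnion_le _ hU _)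
    _ ≤ ∑' x : U, ENNReal.ofReal (10 / c) * ν (closedBall (x : ℝ) (ρ x)) := by
        refine ENNReal.tsum_le_tsum fun x => ?_
        rw [Real.volume_closedBall, ← ofReal_measureReal, ← ENNReal.ofReal_mul (by positivity)]
        refine ENNReal.ofReal_le_ofReal ?_
        rw [div_mul_eq_mul_div, le_div_iff₀ hc]
        linarith [hν x (hUS x.2)]
    _ = ENNReal.ofReal (10 / c) * ν (⋃ x ∈ U, closedBall x (ρ x)) := by
        rw [ENNReal.tsum_mul_left, measure_biUnion (f := fun x => closedBall x (ρ x)) hU hUdisj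
          fun _ _ => measurableSet_closedBall]
    _ < ⊤ := ENNReal.mul_lt_top ENNReal.ofReal_lt_top (measure_lt_top _ _)

theorem Monotone.ofReal_sub_le_stieltjesFunction_measure_Ioc {ψ : ℝ → ℝ} (hψ : Monotone ψ)
    {x y z : ℝ} (hxy : x < y) :
    ENNReal.ofReal (ψ z - ψ y) ≤ hψ.stieltjesFunction.measure (Ioc x z) := by
  rw [StieltjesFunction.measure_Ioc, hψ.stieltjesFunction_eq, hψ.stieltjesFunction_eq]
  exact ENNReal.ofReal_le_ofReal (sub_le_sub (hψ.le_rightLim le_rfl) (hψ.rightLim_le hxy))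

theorem Monotone.isFiniteMeasure_stieltjesFunction_measure {ψ : ℝ → ℝ} (hψ : Monotone ψ)
    {C : ℝ} (hC : ∀ x, |ψ x| ≤ C) : IsFiniteMeasure hψ.stieltjesFunction.measure := by
  refine hψ.stieltjesFunction.isFiniteMeasure_of_forall_abs_le (C := C) fun x => ?_
  rw [hψ.stieltjesFunction_eq]
  have hlow := hψ.le_rightLim (le_refl x)
  have hup := hψ.rightLim_le (lt_add_one x)
  exact abs_le.2 ⟨(abs_le.1 (hC x)).1.trans hlow, hup.trans (abs_le.1 (hC _)).2⟩

theorem volume_lt_top_of_mul_le_sub {ψ ρ : ℝ → ℝ} {S : Set ℝ} {c C : ℝ} (hψ : Monotone ψ)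
    (hC : ∀ x, |ψ x| ≤ C) (hc : 0 < c)
    (hinc : ∀ a ∈ S, 0 < ρ a ∧ c * ρ a ≤ ψ (a + ρ a) - ψ a) : volume S < ⊤ := by
  have := hψ.isFiniteMeasure_stieltjesFunction_measure hC
  refine volume_lt_top_of_mul_le_measureReal_closedBall (ν := hψ.stieltjesFunction.measure) hc
    (fun a ha => (hinc a ha).1) fun a ha => (hinc a ha).2.trans ?_
  calc ψ (a + ρ a) - ψ a ≤ hψ.stieltjesFunction.measure.real (Ioc (a - ρ a) (a + ρ a)) :=
        (ENNReal.ofReal_le_iff_le_toReal (measure_ne_top _ _)).1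
          (hψ.ofReal_sub_le_stieltjesFunction_measure_Ioc (sub_lt_self a (hinc a ha).1))
    _ ≤ _ := measureReal_mono (by rw [Real.closedBall_eq_Icc]; exact Ioc_subset_Icc_self)

theorem lintegral_inv_le_volume_exp_preimage {E : Set ℝ} (hE : E ⊆ Ioi 0) :
    ∫⁻ r in E, ENNReal.ofReal r⁻¹ ≤ volume (exp ⁻¹' E) := by
  set T := toMeasurable volume (exp ⁻¹' E)
  have hET : E ⊆ exp '' T := fun r hr =>
    ⟨log r, subset_toMeasurable _ _ (by simpa [exp_log (hE hr)] using hr), exp_log (hE hr)⟩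
  calc ∫⁻ r in E, ENNReal.ofReal r⁻¹ ≤ ∫⁻ r in exp '' T, ENNReal.ofReal r⁻¹ := lintegral_mono_set hET
    _ = ∫⁻ _ in T, 1 := by
        rw [lintegral_image_eq_lintegral_abs_deriv_mul (measurableSet_toMeasurable _ _)
          (fun x _ => (hasDerivAt_exp x).hasDerivWithinAt) exp_injective.injOn]
        refine setLIntegral_congr_fun (measurableSet_toMeasurable _ _) fun x _ => ?_
        rw [abs_of_pos (exp_pos x), ← ENNReal.ofReal_mul (exp_pos x).le,
          mul_inv_cancel₀ (exp_pos x).ne', ENNReal.ofReal_one]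
    _ = volume (exp ⁻¹' E) := by rw [setLIntegral_one, measure_toMeasurable]

theorem one_add_mul_sub_one_le_rpow_of_nonpos {x p : ℝ} (hx : 0 < x) (hp : p ≤ 0) :
    1 + p * (x - 1) ≤ x ^ p := by
  rw [rpow_def_of_pos hx]
  calc 1 + p * (x - 1) ≤ log x * p + 1 := by
        nlinarith [mul_le_mul_of_nonpos_left (log_le_sub_one_of_pos hx) hp]
    _ ≤ exp (log x * p) := add_one_le_exp _

theorem sub_one_mul_sub_mul_rpow_neg_le {b u v : ℝ} (hb : 1 ≤ b) (hu : 0 < u) (hv : 0 < v) :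
    (b - 1) * (v - u) * v ^ (-b) ≤ u ^ (1 - b) - v ^ (1 - b) := by
  have h := mul_le_mul_of_nonneg_right
    (one_add_mul_sub_one_le_rpow_of_nonpos (div_pos hu hv) (by linarith : 1 - b ≤ 0))
    (rpow_pos_of_pos hv (1 - b)).le
  rw [div_rpow hu.le hv.le, div_mul_cancel₀ _ (rpow_pos_of_pos hv _).ne'] at h
  rw [sub_eq_add_neg 1 b, rpow_add hv, rpow_one] at h ⊢
  field_simp at h
  linarith

theorem mul_log_one_add_le_rpow_sub_rpow {b u₁ u u' ε : ℝ} (hb : 1 < b) (hu₁ : 0 < u₁)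
    (hu : u₁ ≤ u) (hε0 : 0 < ε) (hε1 : ε ≤ 1) (hu' : u + log (1 + ε) ≤ u') :
    (b - 1) / 2 * (1 + u₁⁻¹) ^ (-b) * log (1 + ε * u ^ (-b)) ≤ u ^ (1 - b) - u' ^ (1 - b) := by
  have hu0 : 0 < u := hu₁.trans_le hu
  have hv : 0 < u + ε / 2 := by linarith
  have hvK : u + ε / 2 ≤ (1 + u₁⁻¹) * u := by
    have : (1 + u₁⁻¹) * u = u + u / u₁ := by ring
    linarith [(one_le_div hu₁).2 hu]
  have hvu' : u + ε / 2 ≤ u' := by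
    have : ε / 2 ≤ 2 * ε / (ε + 2) := by rw [le_div_iff₀ (by linarith)]; nlinarith
    linarith [le_log_one_add_of_nonneg hε0.le]
  calc (b - 1) / 2 * (1 + u₁⁻¹) ^ (-b) * log (1 + ε * u ^ (-b))
      ≤ (b - 1) / 2 * (1 + u₁⁻¹) ^ (-b) * (ε * u ^ (-b)) := by
        refine mul_le_mul_of_nonneg_left ?_
          (mul_nonneg (by linarith) (rpow_pos_of_pos (by positivity) _).le)
        linarith [log_le_sub_one_of_pos (by positivity : 0 < 1 + ε * u ^ (-b))]
    _ = (b - 1) * (u + ε / 2 - u) * ((1 + u₁⁻¹) * u) ^ (-b) := by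
        rw [mul_rpow (by positivity) hu0.le]; ring
    _ ≤ (b - 1) * (u + ε / 2 - u) * (u + ε / 2) ^ (-b) := by
        exact mul_le_mul_of_nonneg_left (rpow_le_rpow_of_nonpos hv hvK (by linarith))
          (mul_nonneg (by linarith) (by linarith))
    _ ≤ u ^ (1 - b) - (u + ε / 2) ^ (1 - b) := sub_one_mul_sub_mul_rpow_neg_le hb.le hu0 hv
    _ ≤ u ^ (1 - b) - u' ^ (1 - b) := by
        gcongr u ^ (1 - b) - ?_
        exact rpow_le_rpow_of_nonpos hv hvu' (by linarith)

section

variable {Φ : ℝ → ℝ} (hΦm : MonotoneOn Φ (Ici 1)) (hΦ1 : ∀ r, 1 ≤ r → 1 < Φ r)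
include hΦm hΦ1

theorem log_le_log_max_one (r : ℝ) : log (Φ 1) ≤ log (Φ (max r 1)) :=
  log_le_log (zero_lt_one.trans (hΦ1 1 le_rfl))
    (hΦm (mem_Ici.2 le_rfl) (le_max_right r 1) (le_max_right r 1))

theorem monotone_neg_rpow_log_max_one {p : ℝ} (hp : p ≤ 0) :
    Monotone fun r => -(log (Φ (max r 1)) ^ p) := fun s t hst => by
  have hs : 1 ≤ max s 1 := le_max_right s 1
  have hΦst := hΦm hs (hs.trans (max_le_max_right 1 hst)) (max_le_max_right 1 hst)
  exact neg_le_neg (rpow_le_rpow_of_nonpos (log_pos (hΦ1 _ hs))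
    (log_le_log (zero_lt_one.trans (hΦ1 _ hs)) hΦst) hp)

theorem abs_neg_rpow_log_max_one_le {p : ℝ} (hp : p ≤ 0) (r : ℝ) :
    |-(log (Φ (max r 1)) ^ p)| ≤ log (Φ 1) ^ p := by
  have hlog := log_pos (hΦ1 1 le_rfl)
  rw [abs_neg, abs_of_pos (rpow_pos_of_pos (hlog.trans_le (log_le_log_max_one hΦm hΦ1 r)) p)]
  exact rpow_le_rpow_of_nonpos hlog (log_le_log_max_one hΦm hΦ1 r) hp

theorem mul_log_one_add_le_rpow_log_sub_rpow_log {b e r : ℝ} (hb : 1 < b) (hr : 1 ≤ r)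
    (he0 : 0 < e) (he1 : e ≤ 1) (hE : (1 + e) * Φ r ≤ Φ (r * (1 + e * log (Φ r) ^ (-b)))) :
    (b - 1) / 2 * (1 + (log (Φ 1))⁻¹) ^ (-b) * log (1 + e * log (Φ r) ^ (-b)) ≤
      log (Φ r) ^ (1 - b) - log (Φ (r * (1 + e * log (Φ r) ^ (-b)))) ^ (1 - b) := by
  have hΦ0 : 0 < Φ r := zero_lt_one.trans (hΦ1 r hr)
  refine mul_log_one_add_le_rpow_sub_rpow hb (log_pos (hΦ1 1 le_rfl))
    ((log_le_log_max_one hΦm hΦ1 r).trans_eq (by rw [max_eq_left hr])) he0 he1 ?_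
  rw [add_comm, ← log_mul (by linarith) hΦ0.ne']
  exact log_le_log (mul_pos (by linarith) hΦ0) hE

end

theorem stmt_7_general (b : ℝ) (hb : 1 < b) (Φ ε : ℝ → ℝ)
    (hΦm : MonotoneOn Φ (Set.Ici 1))
    (hΦ1 : ∀ r, 1 ≤ r → 1 < Φ r)
    (hε : ∀ r, 1 ≤ r → ε r ∈ Set.Ioc (0 : ℝ) 1) :
    ∫⁻ r in {r : ℝ | 1 ≤ r ∧
        (1 + ε r) * Φ r ≤ Φ (r + r * ε r * Real.log (Φ r) ^ (-b))},
      ENNReal.ofReal r⁻¹ < ⊤ := by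
  have hb' : 1 - b ≤ 0 := by linarith
  have hc : 0 < (b - 1) / 2 * (1 + (log (Φ 1))⁻¹) ^ (-b) :=
    mul_pos (by linarith) (rpow_pos_of_pos (by have := log_pos (hΦ1 1 le_rfl); positivity) _)
  refine (lintegral_inv_le_volume_exp_preimage fun r hr => zero_lt_one.trans_le hr.1).trans_lt
    (volume_lt_top_of_mul_le_sub ((monotone_neg_rpow_log_max_one hΦm hΦ1 hb').comp exp_monotone)
      (fun s => abs_neg_rpow_log_max_one_le hΦm hΦ1 hb' (exp s)) hc
      (ρ := fun a => log (1 + ε (exp a) * log (Φ (exp a)) ^ (-b))) fun a ⟨hr, hE⟩ => ?_)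
  obtain ⟨hε0, hε1⟩ := hε _ hr
  have hx : 0 < ε (exp a) * log (Φ (exp a)) ^ (-b) :=
    mul_pos hε0 (rpow_pos_of_pos (log_pos (hΦ1 _ hr)) _)
  have hshift : exp (a + log (1 + ε (exp a) * log (Φ (exp a)) ^ (-b))) =
      exp a * (1 + ε (exp a) * log (Φ (exp a)) ^ (-b)) := by
    rw [exp_add, exp_log (by linarith)]
  refine ⟨log_pos (by linarith), ?_⟩
  have hr' : 1 ≤ exp a * (1 + ε (exp a) * log (Φ (exp a)) ^ (-b)) :=
    one_le_mul_of_one_le_of_one_le hr (by linarith)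
  simp only [Function.comp_apply, hshift, max_eq_left hr, max_eq_left hr']
  have := mul_log_one_add_le_rpow_log_sub_rpow_log hΦm hΦ1 hb hr hε0 hε1
    (by rwa [mul_one_add, ← mul_assoc])
  linarith

/-- Borel–Nevanlinna-type growth lemma: the set
`E = { r ≥ 1 : Φ(r + r·ε(r)·(log Φ(r))^{-b}) ≥ (1+ε(r))Φ(r) }` has finite logarithmic
measure. -/
theorem stmt_7 (b : ℝ) (hb : 1 < b) (Φ ε : ℝ → ℝ)
    (hΦc : ContinuousOn Φ (Set.Ici 1)) (hΦm : MonotoneOn Φ (Set.Ici 1))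
    (hΦ1 : ∀ r, 1 ≤ r → 1 < Φ r) (hΦtop : Tendsto Φ atTop atTop)
    (hεc : ContinuousOn ε (Set.Ici 1)) (hεm : AntitoneOn ε (Set.Ici 1))
    (hε : ∀ r, 1 ≤ r → ε r ∈ Set.Ioc (0 : ℝ) 1) :
    ∫⁻ r in {r : ℝ | 1 ≤ r ∧
        (1 + ε r) * Φ r ≤ Φ (r + r * ε r * Real.log (Φ r) ^ (-b))},
      ENNReal.ofReal r⁻¹ < ⊤ :=
  stmt_7_general b hb Φ ε hΦm hΦ1 hε
end

section
/- Let g_N(θ) = (sin(2πθ))^{2N}. Then there exist absolute constants c, C > 0 such that for all N sufficiently large: (a) |g_N(θ)| ≤ e^{−cN²} whenever |θ| ≤ e^{−CN}; and (b) ∫_𝕋 |g_N(θ)|² dθ ≥ c/N. -/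
/-!
Near `0`, `|sin (2πθ)| ≤ 2π|θ| ≤ e^{2 - CN}`, so raising to the power `2N` gives a bound
`e^{-cN²}`. For `∫_𝕋 g_N²`, the reduction formula for `∫ sin^n` over a full period has no
boundary terms, so `a_k = ∫₀^{2π} sin^{2k}` satisfies `a_{k+1} = (2k+1)/(2k+2) · a_k`, whence
`a_k ≥ 2π/(2k+1)` by induction; `∫_𝕋 g_N²` is the case `k = 2N`, rescaled.
-/

open Real

lemma two_pi_le_exp_two : 2 * π ≤ exp 2 := by
  have he : exp 2 = exp 1 * exp 1 := by rw [← exp_add]; norm_num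
  nlinarith [exp_one_gt_d9, pi_lt_d2]

lemma abs_sin_two_pi_mul_le_exp {θ t : ℝ} (hθ : |θ| ≤ exp (-t)) :
    |sin (2 * π * θ)| ≤ exp (2 - t) :=
  calc |sin (2 * π * θ)| ≤ |2 * π * θ| := abs_sin_le_abs
    _ = 2 * π * |θ| := by rw [abs_mul, abs_of_pos two_pi_pos]
    _ ≤ exp 2 * exp (-t) := mul_le_mul two_pi_le_exp_two hθ (abs_nonneg θ) (exp_pos 2).le
    _ = exp (2 - t) := by rw [← exp_add, sub_eq_add_neg]

lemma integral_sin_pow_add_two_zero_two_pi (n : ℕ) :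
    ∫ x in (0 : ℝ)..2 * π, sin x ^ (n + 2) =
      (n + 1) / (n + 2) * ∫ x in (0 : ℝ)..2 * π, sin x ^ n := by
  simp [integral_sin_pow]

lemma two_pi_div_le_integral_sin_pow_two_mul (k : ℕ) :
    2 * π / (2 * k + 1) ≤ ∫ x in (0 : ℝ)..2 * π, sin x ^ (2 * k) := by
  induction k with
  | zero => simp
  | succ k ih =>
    rw [mul_add, mul_one, integral_sin_pow_add_two_zero_two_pi]
    have hk : (2 * k + 1 : ℝ) / (2 * k + 2) * (2 * π / (2 * k + 1)) = 2 * π / (2 * k + 2) := by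
      field_simp
    calc 2 * π / (2 * ↑(k + 1) + 1) ≤ 2 * π / (2 * k + 2) :=
          div_le_div_of_nonneg_left (by positivity) (by positivity) (by push_cast; linarith)
      _ = (2 * k + 1) / (2 * k + 2) * (2 * π / (2 * k + 1)) := hk.symm
      _ ≤ _ := by push_cast; gcongr

lemma inv_le_integral_sin_two_pi_mul_pow_two_mul (k : ℕ) :
    1 / (2 * k + 1) ≤ ∫ θ in (0 : ℝ)..1, sin (2 * π * θ) ^ (2 * k) := by
  rw [intervalIntegral.integral_comp_mul_left (fun x ↦ sin x ^ (2 * k)) two_pi_pos.ne',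
    mul_zero, mul_one, smul_eq_mul, le_inv_mul_iff₀ two_pi_pos, ← mul_div_assoc, mul_one]
  exact two_pi_div_le_integral_sin_pow_two_mul k

/-- For `g_N(θ) = sin(2πθ)^{2N}`: (a) `|g_N(θ)| ≤ e^{-cN²}` for `|θ| ≤ e^{-CN}`, and
(b) `∫_𝕋 |g_N|² ≥ c/N`, for all sufficiently large `N`. -/
theorem stmt_9 : ∃ c > (0 : ℝ), ∃ C > (0 : ℝ), ∃ N₀ : ℕ, ∀ N ≥ N₀,
    (∀ θ : ℝ, |θ| ≤ Real.exp (-(C * N)) →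
      |Real.sin (2 * Real.pi * θ) ^ (2 * N)| ≤ Real.exp (-(c * N ^ 2))) ∧
    c / N ≤ ∫ θ in (0 : ℝ)..1, (Real.sin (2 * Real.pi * θ) ^ (2 * N)) ^ 2 := by
  refine ⟨1 / 5, by norm_num, 2, by norm_num, 2, fun N hN ↦ ?_⟩
  have hN' : (2 : ℝ) ≤ N := by exact_mod_cast hN
  refine ⟨fun θ hθ ↦ ?_, ?_⟩
  · calc |sin (2 * π * θ) ^ (2 * N)| = |sin (2 * π * θ)| ^ (2 * N) := abs_pow _ _
      _ ≤ exp (2 - 2 * N) ^ (2 * N) := by gcongr; exact abs_sin_two_pi_mul_le_exp hθ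
      _ = exp ((2 - 2 * N) * (2 * N)) := by rw [← exp_nat_mul]; push_cast; ring_nf
      _ ≤ exp (-(1 / 5 * N ^ 2)) := by gcongr; nlinarith
  · simp_rw [← pow_mul, show 2 * N * 2 = 2 * (2 * N) by ring]
    refine le_trans ?_ (inv_le_integral_sin_two_pi_mul_pow_two_mul (2 * N))
    rw [div_le_div_iff₀ (by positivity) (by positivity)]
    push_cast
    linarith
end

section
/- Let f(z) = Σ_{k≥0} ξ_k e^{−αk²} z^k where ξ_k ∈ {−1, +1} is an arbitrary sequence of signs and α ≥ log 3. Then for every sufficiently large m ∈ ℕ, the function f has exactly m zeros (counted with multiplicity) in the closed disk {|z| ≤ e^{2αm}}. -/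
/-!
On the circle `|z| = e^{2αm}` the term `ξ_m e^{-αm²} z^m` dominates the series: the `k`-th term
has modulus `e^{αm²} e^{-α(k-m)²}`, and `∑_{j ∈ ℤ} e^{-αj²} < 2` because
`∑_{j ≥ 1} e^{-αj²} < ∑_{j ≥ 1} 3^{-j} = 1/2` for `α ≥ log 3`. Rouché's theorem, in the form
`∮ f'/f = ∮ h'/h` whenever `|f - h| < |h|` on the circle, then gives `f` as many zeros in the disk
as `z^m`. To exhibit them, the finitely many zeros of the entire function `f` in the closed disk are
divided out with their multiplicities, `f = ∏ (z - zᵢ) · g`, and the argument principle for such a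
product shows that there are exactly `m` factors.
-/

open Complex

open Metric Filter Topology
open scoped Real

lemma Differentiable.exists_eq_pow_sub_mul {f : ℂ → ℂ} (hf : Differentiable ℂ f) {z₁ : ℂ}
    (hz₁ : f z₁ ≠ 0) (a : ℂ) :
    ∃ (N : ℕ) (g : ℂ → ℂ), Differentiable ℂ g ∧ g a ≠ 0 ∧ ∀ z, f z = (z - a) ^ N * g z := by
  obtain ⟨p, hp⟩ := hf.analyticAt a
  have hp0 : p ≠ 0 := by
    rintro rfl
    have htop : analyticOrderAt f a = ⊤ := analyticOrderAt_eq_top.2 (hp.locally_zero_iff.2 rfl)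
    rw [AnalyticOnNhd.analyticOrderAt_eq_top_iff_eq_zero a hf.analyticAt] at htop
    exact hz₁ (congrFun htop z₁)
  set g := (Function.swap dslope a)^[p.order] f
  have hfg : ∀ z, f z = (z - a) ^ p.order * g z := hp.eq_pow_order_mul_iterate_dslope
  refine ⟨p.order, g, fun z => ?_, hp.iterate_dslope_fslope_ne_zero hp0, hfg⟩
  rcases eq_or_ne z a with rfl | hz
  · exact (hp.has_fpower_series_iterate_dslope_fslope p.order).differentiableAt
  · have hquot : (fun w => f w / (w - a) ^ p.order) =ᶠ[𝓝 z] g := by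
      filter_upwards [eventually_ne_nhds hz] with w hw
      rw [hfg w, mul_div_cancel_left₀ _ (pow_ne_zero _ (sub_ne_zero.2 hw))]
    exact ((hf z).div ((differentiableAt_id.sub_const a).pow _)
      (pow_ne_zero _ (sub_ne_zero.2 hz))).congr_of_eventuallyEq hquot.symm

lemma Differentiable.exists_eq_prod_sub_mul_of_finset {f : ℂ → ℂ} (hf : Differentiable ℂ f)
    (hf₁ : ∃ z₁, f z₁ ≠ 0) {K : Set ℂ} (Z : Finset ℂ) (hZ : ∀ z ∈ K, f z = 0 → z ∈ Z) :
    ∃ (n : ℕ) (zs : Fin n → ℂ) (g : ℂ → ℂ), (∀ i, zs i ∈ Z) ∧ Differentiable ℂ g ∧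
      (∀ z ∈ K, g z ≠ 0) ∧ ∀ z, f z = (∏ i, (z - zs i)) * g z := by
  classical
  induction Z using Finset.induction_on generalizing f with
  | empty =>
    exact ⟨0, Fin.elim0, f, fun i => i.elim0, hf, fun z hz h => by simpa using hZ z hz h, by simp⟩
  | insert a Z _ ih =>
    obtain ⟨z₁, hz₁⟩ := hf₁
    obtain ⟨N, g, hg, hga, hfg⟩ := hf.exists_eq_pow_sub_mul hz₁ a
    have hgZ : ∀ z ∈ K, g z = 0 → z ∈ Z := fun z hz h => by
      have := hZ z hz (by rw [hfg, h, mul_zero])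
      rcases Finset.mem_insert.1 this with rfl | h'
      · exact absurd h hga
      · exact h'
    obtain ⟨n, ws, h, hws, hh, hhK, hgh⟩ := ih hg ⟨a, hga⟩ hgZ
    refine ⟨N + n, Fin.append (fun _ => a) ws, h, fun i => ?_, hh, hhK, fun z => ?_⟩
    · refine Fin.addCases (fun _ => ?_) (fun i => ?_) i <;> simp [hws]
    · simp [hfg z, hgh z, Fin.prod_univ_add, mul_assoc]

theorem Differentiable.exists_eq_prod_sub_mul {f : ℂ → ℂ} (hf : Differentiable ℂ f) {z₁ : ℂ}
    (hz₁ : f z₁ ≠ 0) {K : Set ℂ} (hK : IsCompact K) :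
    ∃ (n : ℕ) (zs : Fin n → ℂ) (g : ℂ → ℂ), (∀ i, zs i ∈ K ∧ f (zs i) = 0) ∧
      Differentiable ℂ g ∧ (∀ z ∈ K, g z ≠ 0) ∧ ∀ z, f z = (∏ i, (z - zs i)) * g z := by
  have hcodiscrete :=
    AnalyticOnNhd.preimage_zero_mem_codiscrete (fun z _ => hf.analyticAt z) hz₁
  have hfin : (K ∩ f ⁻¹' {0}).Finite := by
    simpa [Set.sdiff_eq] using hK.finite_sdiff_of_mem_codiscreteWithin
      (codiscreteWithin_mono (Set.subset_univ K) hcodiscrete)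
  obtain ⟨n, zs, g, hzs, hg⟩ := hf.exists_eq_prod_sub_mul_of_finset ⟨z₁, hz₁⟩ hfin.toFinset
    fun z hz h => hfin.mem_toFinset.2 ⟨hz, h⟩
  exact ⟨n, zs, g, fun i => hfin.mem_toFinset.1 (hzs i), hg⟩

lemma Differentiable.continuousOn_logDeriv {f : ℂ → ℂ} (hf : Differentiable ℂ f) {s : Set ℂ}
    (hs : ∀ z ∈ s, f z ≠ 0) : ContinuousOn (logDeriv f) s :=
  hf.deriv.continuous.continuousOn.div hf.continuous.continuousOn hs

lemma Differentiable.circleIntegral_logDeriv_eq_zero {g : ℂ → ℂ} (hg : Differentiable ℂ g)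
    {c : ℂ} {R : ℝ} (hR : 0 ≤ R) (hg0 : ∀ z ∈ closedBall c R, g z ≠ 0) :
    ∮ z in C(c, R), logDeriv g z = 0 := by
  have hd : ∀ z ∈ closedBall c R, DifferentiableAt ℂ (logDeriv g) z :=
    fun z hz => (hg.deriv z).div (hg z) (hg0 z hz)
  exact circleIntegral_eq_zero_of_differentiable_on_off_countable hR Set.countable_empty
    (fun z hz => (hd z hz).continuousAt.continuousWithinAt)
    (fun z hz => hd z (ball_subset_closedBall hz.1))

theorem circleIntegral_logDeriv_prod_sub_mul {n : ℕ} {zs : Fin n → ℂ} {g : ℂ → ℂ}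
    (hg : Differentiable ℂ g) {c : ℂ} {R : ℝ} (hR : 0 < R) (hzs : ∀ i, zs i ∈ ball c R)
    (hg0 : ∀ z ∈ closedBall c R, g z ≠ 0) :
    ∮ z in C(c, R), logDeriv (fun w => (∏ i, (w - zs i)) * g w) z = n * (2 * π * I) := by
  have hsub : ∀ z ∈ sphere c R, ∀ i, z - zs i ≠ 0 := fun z hz i h =>
    (mem_ball.1 (hzs i)).ne (mem_sphere.1 (sub_eq_zero.1 h ▸ hz))
  have hlog : Set.EqOn (logDeriv fun w => (∏ i, (w - zs i)) * g w)
      (fun z => ∑ i, (z - zs i)⁻¹ + logDeriv g z) (sphere c R) := fun z hz => by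
    rw [logDeriv_mul z (Finset.prod_ne_zero_iff.2 fun i _ => hsub z hz i)
      (hg0 z (sphere_subset_closedBall hz)) (by fun_prop) (hg z),
      logDeriv_prod (fun i _ => hsub z hz i) (fun i _ => by fun_prop)]
    simp [logDeriv_apply]
  have hinv : ∀ i, CircleIntegrable (fun z => (z - zs i)⁻¹) c R := fun i =>
    circleIntegrable_sub_inv_iff.2 <| .inr fun h =>
      (mem_ball.1 (hzs i)).ne (mem_sphere.1 (abs_of_pos hR ▸ h))
  have hsum : CircleIntegrable (fun z => ∑ i, (z - zs i)⁻¹) c R := by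
    convert CircleIntegrable.sum Finset.univ fun i _ => hinv i using 1
    ext z; simp
  have hg' : CircleIntegrable (logDeriv g) c R := ContinuousOn.circleIntegrable hR.le <|
    hg.continuousOn_logDeriv fun z hz => hg0 z (sphere_subset_closedBall hz)
  rw [circleIntegral.integral_congr hR.le hlog, circleIntegral.integral_add hsum hg',
    circleIntegral.integral_fun_sum fun i _ => hinv i, hg.circleIntegral_logDeriv_eq_zero hR.le hg0]
  simp [circleIntegral.integral_sub_inv_of_mem_ball (hzs _)]

/-- `f / h` maps the circle into the slit plane, so `log (f / h)` is a primitive of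
`logDeriv f - logDeriv h` there. -/
theorem circleIntegral_logDeriv_eq_of_norm_sub_lt {f h : ℂ → ℂ} (hf : Differentiable ℂ f)
    (hh : Differentiable ℂ h) {c : ℂ} {R : ℝ} (hR : 0 ≤ R)
    (hlt : ∀ z ∈ sphere c R, ‖f z - h z‖ < ‖h z‖) :
    ∮ z in C(c, R), logDeriv f z = ∮ z in C(c, R), logDeriv h z := by
  have hh0 : ∀ z ∈ sphere c R, h z ≠ 0 := fun z hz =>
    norm_pos_iff.1 ((norm_nonneg _).trans_lt (hlt z hz))
  have hf0 : ∀ z ∈ sphere c R, f z ≠ 0 := fun z hz h0 => by simpa [h0] using hlt z hz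
  have hslit : ∀ z ∈ sphere c R, f z / h z ∈ slitPlane := fun z hz => by
    have := mem_slitPlane_of_norm_lt_one (z := f z / h z - 1) (by
      rw [div_sub_one (hh0 z hz), norm_div, div_lt_one (norm_pos_iff.2 (hh0 z hz))]; exact hlt z hz)
    rwa [add_sub_cancel] at this
  have hprim : ∀ z ∈ sphere c R, HasDerivWithinAt (fun w => log (f w / h w))
      (logDeriv f z - logDeriv h z) (sphere c R) z := fun z hz => by
    rw [← logDeriv_div z (hf0 z hz) (hh0 z hz) (hf z) (hh z)]
    exact (((hf z).div (hh z) (hh0 z hz)).hasDerivAt.clog (hslit z hz)).hasDerivWithinAt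
  rw [← sub_eq_zero, ← circleIntegral.integral_sub
    ((hf.continuousOn_logDeriv hf0).circleIntegrable hR)
    ((hh.continuousOn_logDeriv hh0).circleIntegrable hR)]
  exact circleIntegral.integral_eq_zero_of_hasDerivWithinAt hR hprim

theorem Differentiable.exists_eq_prod_sub_mul_of_norm_sub_monomial_lt {f : ℂ → ℂ}
    (hf : Differentiable ℂ f) {a : ℂ} {m : ℕ} {R : ℝ} (hR : 0 < R)
    (hlt : ∀ z ∈ sphere (0 : ℂ) R, ‖f z - a * z ^ m‖ < ‖a * z ^ m‖) :
    ∃ (zs : Fin m → ℂ) (g : ℂ → ℂ), (∀ i, zs i ∈ ball (0 : ℂ) R) ∧ Differentiable ℂ g ∧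
      (∀ z ∈ closedBall (0 : ℂ) R, g z ≠ 0) ∧ ∀ z, f z = (∏ i, (z - zs i)) * g z := by
  have hf0 : ∀ z ∈ sphere (0 : ℂ) R, f z ≠ 0 := fun z hz h0 => by simpa [h0] using hlt z hz
  have hRs : (R : ℂ) ∈ sphere (0 : ℂ) R := by simp [abs_of_pos hR]
  have ha : a ≠ 0 := fun h0 => (norm_nonneg _).not_gt (by simpa [h0] using hlt _ hRs)
  obtain ⟨n, zs, g, hzs, hg, hg0, hfg⟩ :=
    hf.exists_eq_prod_sub_mul (hf0 _ hRs) (isCompact_closedBall 0 R)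
  have hzs_ball : ∀ i, zs i ∈ ball (0 : ℂ) R := fun i =>
    mem_ball.2 <| (mem_closedBall.1 (hzs i).1).lt_of_ne fun h => hf0 _ h (hzs i).2
  have hcount := circleIntegral_logDeriv_eq_of_norm_sub_lt hf (by fun_prop) hR.le hlt
  have hmono : (fun z => a * z ^ m) = fun z => (∏ _i : Fin m, (z - 0)) * a := by
    ext z; simp [mul_comm]
  rw [funext hfg, hmono, circleIntegral_logDeriv_prod_sub_mul hg hR hzs_ball hg0,
    circleIntegral_logDeriv_prod_sub_mul (differentiable_const a) hR
      (fun _ => mem_ball_self hR) fun _ _ => ha] at hcount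
  obtain rfl : n = m := by exact_mod_cast mul_right_cancel₀ two_pi_I_ne_zero hcount
  exact ⟨zs, g, hzs_ball, hg, hg0, hfg⟩

lemma differentiable_tsum_mul_pow {c : ℕ → ℂ}
    (hc : (FormalMultilinearSeries.ofScalars ℂ c).radius = ⊤) :
    Differentiable ℂ fun z => ∑' k, c k * z ^ k := by
  have hsum : (fun z => ∑' k, c k * z ^ k) = (FormalMultilinearSeries.ofScalars ℂ c).sum := by
    ext z
    simp [FormalMultilinearSeries.sum, mul_comm]
  have hball := (FormalMultilinearSeries.ofScalars ℂ c).hasFPowerSeriesOnBall (by simp [hc])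
  rw [hc] at hball
  exact hsum ▸ fun z => (hball.analyticAt_of_mem (by simp)).differentiableAt

lemma radius_ofScalars_eq_top_of_norm_eq {α : ℝ} (hα : 0 < α) {c : ℕ → ℂ}
    (hc : ∀ k, ‖c k‖ = Real.exp (-(α * k ^ 2))) :
    (FormalMultilinearSeries.ofScalars ℂ c).radius = ⊤ := by
  refine FormalMultilinearSeries.ofScalars_radius_eq_top_of_tendsto _ _
    (.of_forall fun k => norm_ne_zero_iff.1 ((hc k).trans_ne (Real.exp_pos _).ne')) ?_
  have hratio : ∀ n : ℕ, ‖c n.succ‖ / ‖c n‖ = Real.exp (-(α * (2 * n + 1))) := fun n => by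
    rw [hc, hc, ← Real.exp_sub]; push_cast; ring_nf
  simp only [hratio]
  refine Real.tendsto_exp_atBot.comp (tendsto_neg_atTop_atBot.comp
    (Tendsto.const_mul_atTop hα (tendsto_atTop_add_const_right _ _ ?_)))
  exact (tendsto_natCast_atTop_atTop (R := ℝ)).const_mul_atTop two_pos

lemma exp_neg_le_inv_three {α : ℝ} (hα : Real.log 3 ≤ α) : Real.exp (-α) ≤ 1 / 3 := by
  rw [Real.exp_neg, one_div]
  exact inv_anti₀ (by norm_num) (by simpa [Real.exp_log] using Real.exp_le_exp.2 hα)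

lemma exp_neg_mul_sq_succ_le {α : ℝ} (hα : Real.log 3 ≤ α) (n : ℕ) :
    Real.exp (-(α * ((n : ℝ) + 1) ^ 2)) ≤ (1 / 3) ^ (n + 1) := by
  have hα0 : 0 ≤ α := (Real.log_pos (by norm_num)).le.trans hα
  calc Real.exp (-(α * ((n : ℝ) + 1) ^ 2)) ≤ Real.exp (-α) ^ (n + 1) := by
        rw [← Real.exp_nat_mul, Real.exp_le_exp]
        push_cast
        nlinarith [mul_nonneg hα0 (by positivity : (0 : ℝ) ≤ n * (n + 1))]
    _ ≤ (1 / 3) ^ (n + 1) := by gcongr; exact exp_neg_le_inv_three hα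

lemma summable_inv_three_pow_succ : Summable fun n : ℕ => ((1 : ℝ) / 3) ^ (n + 1) :=
  (summable_nat_add_iff 1).2 (summable_geometric_of_lt_one (by norm_num) (by norm_num))

lemma summable_exp_neg_mul_sq_succ {α : ℝ} (hα : Real.log 3 ≤ α) :
    Summable fun n : ℕ => Real.exp (-(α * ((n : ℝ) + 1) ^ 2)) :=
  .of_nonneg_of_le (fun _ => (Real.exp_pos _).le) (exp_neg_mul_sq_succ_le hα)
    summable_inv_three_pow_succ

lemma tsum_exp_neg_mul_sq_succ_lt {α : ℝ} (hα : Real.log 3 ≤ α) :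
    ∑' n : ℕ, Real.exp (-(α * ((n : ℝ) + 1) ^ 2)) < 1 / 2 := by
  have hα0 : 0 < α := (Real.log_pos (by norm_num)).trans_le hα
  have hstrict : Real.exp (-(α * ((1 : ℕ) + 1 : ℝ) ^ 2)) < (1 / 3) ^ (1 + 1) :=
    calc Real.exp (-(α * ((1 : ℕ) + 1 : ℝ) ^ 2)) < Real.exp (-α) ^ 2 := by
          rw [← Real.exp_nat_mul, Real.exp_lt_exp]; push_cast; nlinarith
      _ ≤ (1 / 3) ^ (1 + 1) := by gcongr; exact exp_neg_le_inv_three hα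
  calc ∑' n : ℕ, Real.exp (-(α * ((n : ℝ) + 1) ^ 2)) < ∑' n : ℕ, ((1 : ℝ) / 3) ^ (n + 1) :=
        Summable.tsum_lt_tsum (exp_neg_mul_sq_succ_le hα) hstrict
          (summable_exp_neg_mul_sq_succ hα) summable_inv_three_pow_succ
    _ = 1 / 2 := by
        simp_rw [pow_succ']
        rw [tsum_mul_left, tsum_geometric_of_lt_one (by norm_num) (by norm_num)]
        norm_num

lemma exp_neg_mul_sq_int_succ (α : ℝ) (n : ℕ) :
    Real.exp (-(α * (((n : ℤ) + 1 : ℤ) : ℝ) ^ 2)) = Real.exp (-(α * ((n : ℝ) + 1) ^ 2)) ∧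
    Real.exp (-(α * ((-((n : ℤ) + 1) : ℤ) : ℝ) ^ 2)) = Real.exp (-(α * ((n : ℝ) + 1) ^ 2)) := by
  push_cast; ring_nf; simp

lemma summable_exp_neg_mul_sq_int {α : ℝ} (hα : Real.log 3 ≤ α) :
    Summable fun j : ℤ => Real.exp (-(α * (j : ℝ) ^ 2)) :=
  .of_add_one_of_neg_add_one
    ((summable_exp_neg_mul_sq_succ hα).congr fun n => (exp_neg_mul_sq_int_succ α n).1.symm)
    ((summable_exp_neg_mul_sq_succ hα).congr fun n => (exp_neg_mul_sq_int_succ α n).2.symm)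

lemma tsum_exp_neg_mul_sq_int_lt_two {α : ℝ} (hα : Real.log 3 ≤ α) :
    ∑' j : ℤ, Real.exp (-(α * (j : ℝ) ^ 2)) < 2 := by
  have hS := summable_exp_neg_mul_sq_succ hα
  rw [tsum_of_add_one_of_neg_add_one
    (hS.congr fun n => (exp_neg_mul_sq_int_succ α n).1.symm)
    (hS.congr fun n => (exp_neg_mul_sq_int_succ α n).2.symm)]
  simp only [exp_neg_mul_sq_int_succ, Int.cast_zero]
  norm_num
  linarith [tsum_exp_neg_mul_sq_succ_lt hα]

lemma norm_tsum_sub_le {ι E : Type*} [DecidableEq ι] [NormedAddCommGroup E] [CompleteSpace E]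
    {a : ι → E} (ha : Summable fun k => ‖a k‖) (i : ι) :
    ‖∑' k, a k - a i‖ ≤ ∑' k, ‖a k‖ - ‖a i‖ := by
  rw [ha.of_norm.tsum_eq_add_tsum_ite i, ha.tsum_eq_add_tsum_ite i, add_sub_cancel_left,
    add_sub_cancel_left]
  have hite : (fun k => ‖if k = i then 0 else a k‖) = fun k => if k = i then 0 else ‖a k‖ := by
    ext k; split_ifs <;> simp
  refine (norm_tsum_le_tsum_norm ?_).trans_eq (congrArg tsum hite)
  exact hite ▸ ha.of_nonneg_of_le (fun k => by split_ifs <;> simp) (fun k => by split_ifs <;> simp)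

lemma norm_mul_pow_of_norm_eq {α : ℝ} {c : ℕ → ℂ} (hc : ∀ k, ‖c k‖ = Real.exp (-(α * k ^ 2)))
    (m : ℕ) {z : ℂ} (hz : ‖z‖ = Real.exp (2 * α * m)) (k : ℕ) :
    ‖c k * z ^ k‖ = Real.exp (α * m ^ 2) * Real.exp (-(α * (((k : ℤ) - m : ℤ) : ℝ) ^ 2)) := by
  rw [norm_mul, norm_pow, hc, hz, ← Real.exp_nat_mul, ← Real.exp_add, ← Real.exp_add]
  push_cast
  ring_nf

lemma norm_tsum_mul_pow_sub_lt {α : ℝ} (hα : Real.log 3 ≤ α) {c : ℕ → ℂ}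
    (hc : ∀ k, ‖c k‖ = Real.exp (-(α * k ^ 2))) (m : ℕ) {z : ℂ}
    (hz : ‖z‖ = Real.exp (2 * α * m)) :
    ‖∑' k, c k * z ^ k - c m * z ^ m‖ < ‖c m * z ^ m‖ := by
  have hθ := summable_exp_neg_mul_sq_int hα
  have hinj : Function.Injective fun k : ℕ => (k : ℤ) - m := fun _ _ h => by simpa using h
  have hsum : Summable fun k => ‖c k * z ^ k‖ := by
    simp_rw [norm_mul_pow_of_norm_eq hc m hz]
    exact (hθ.comp_injective hinj).mul_left _
  have hm : ‖c m * z ^ m‖ = Real.exp (α * m ^ 2) := by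
    rw [norm_mul_pow_of_norm_eq hc m hz, sub_self, Int.cast_zero]; simp
  have htotal : ∑' k, ‖c k * z ^ k‖ < 2 * Real.exp (α * m ^ 2) :=
    calc ∑' k, ‖c k * z ^ k‖
        = Real.exp (α * m ^ 2) * ∑' k : ℕ, Real.exp (-(α * (((k : ℤ) - m : ℤ) : ℝ) ^ 2)) := by
          simp_rw [norm_mul_pow_of_norm_eq hc m hz, tsum_mul_left]
      _ ≤ Real.exp (α * m ^ 2) * ∑' j : ℤ, Real.exp (-(α * (j : ℝ) ^ 2)) := by
          gcongr
          exact tsum_comp_le_tsum_of_inj hθ (fun _ => (Real.exp_pos _).le) hinj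
      _ < Real.exp (α * m ^ 2) * 2 := by
          gcongr; exact tsum_exp_neg_mul_sq_int_lt_two hα
      _ = 2 * Real.exp (α * m ^ 2) := mul_comm _ _
  linarith [norm_tsum_sub_le hsum m]

/-- For `f(z) = Σ_k ξ_k e^{-αk²} z^k` with arbitrary signs `ξ_k ∈ {±1}` and `α ≥ log 3`,
for every sufficiently large `m` the function `f` has exactly `m` zeros (with multiplicity)
in the closed disk `{|z| ≤ e^{2αm}}`. -/
theorem stmt_10 (α : ℝ) (hα : Real.log 3 ≤ α) (ξ : ℕ → ℝ) (hξ : ∀ k, ξ k = 1 ∨ ξ k = -1)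
    (f : ℂ → ℂ)
    (hf : ∀ z, f z = ∑' k : ℕ, ((ξ k * Real.exp (-(α * k ^ 2)) : ℝ) : ℂ) * z ^ k) :
    ∃ M : ℕ, ∀ m : ℕ, M ≤ m →
      ∃ (z : Fin m → ℂ) (g : ℂ → ℂ),
        (∀ i, ‖z i‖ ≤ Real.exp (2 * α * m)) ∧
        (∀ w ∈ Metric.closedBall (0 : ℂ) (Real.exp (2 * α * m)), AnalyticAt ℂ g w ∧ g w ≠ 0) ∧
        (∀ w ∈ Metric.closedBall (0 : ℂ) (Real.exp (2 * α * m)),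
          f w = (∏ i, (w - z i)) * g w) := by
  refine ⟨0, fun m _ => ?_⟩
  set c : ℕ → ℂ := fun k => ((ξ k * Real.exp (-(α * k ^ 2)) : ℝ) : ℂ)
  have hc : ∀ k, ‖c k‖ = Real.exp (-(α * k ^ 2)) := fun k => by
    simp only [c, Complex.norm_real, norm_mul, Real.norm_eq_abs, Real.abs_exp]
    rcases hξ k with h | h <;> simp [h]
  have hf' : f = fun z => ∑' k, c k * z ^ k := funext hf
  have hfd : Differentiable ℂ f := hf' ▸ differentiable_tsum_mul_pow
    (radius_ofScalars_eq_top_of_norm_eq ((Real.log_pos (by norm_num)).trans_le hα) hc)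
  obtain ⟨zs, g, hzs, hg, hg0, hfg⟩ := hfd.exists_eq_prod_sub_mul_of_norm_sub_monomial_lt
    (a := c m) (Real.exp_pos _) fun z hz => by
      rw [hf']; exact norm_tsum_mul_pow_sub_lt hα hc m (by simpa using hz)
  exact ⟨zs, g, fun i => (mem_ball_zero_iff.1 (hzs i)).le,
    fun w hw => ⟨hg.analyticAt w, hg0 w hw⟩, fun w _ => hfg w⟩
end

section
/- Let f(z) = Σ_{k≥0} ξ_k e^{−αk²} z^k where ξ_k ∈ {−1, +1} is an arbitrary sequence of signs and α ≥ log 3. Then all zeros of f are real. -/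
/-!
Write `q = e^{-α} ≤ 1/3` and `r = |z|`, so that the `k`-th term of `f` has modulus
`q^{k²} r^k`. If `z` is a zero then so is `z̄`, of the same modulus. For any `p`, multiplying
the two equations by `z̄^p` and `z^p` and subtracting gives `Σ a_k (z^k z̄^p - z̄^k z^p) = 0`,
where `z^k z̄^p - z̄^k z^p` is `z - z̄` times a quotient of size at most `|k - p| r^{k+p-1}`,
with equality for `|k - p| = 1`. The ratio `q^{2k+1} r` of consecutive moduli shrinks by the
factor `q² ≤ 1/9` at each step, so for a maximal term `j` and a suitable neighbour `p` the
single term `j` outweighs all others: `Σ_k |k - p| q^{k²} r^k < 2 q^{j²} r^j`. This forces `z = z̄`.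
-/

open Complex ComplexConjugate Finset Filter Topology

section Separation

variable {𝕜 : Type*} [NormedField 𝕜]

lemma mul_norm_pow_sub_pow_le {R : Type*} [SeminormedRing R] [NormOneClass R] {z w : R} {ρ : ℝ}
    (hz : ‖z‖ ≤ ρ) (hw : ‖w‖ ≤ ρ) (n : ℕ) :
    ρ * ‖z ^ n - w ^ n‖ ≤ n * ρ ^ n * ‖z - w‖ := by
  have hρ : 0 ≤ ρ := (norm_nonneg z).trans hz
  induction n with
  | zero => simp
  | succ n ih =>
    have hsplit : z ^ (n + 1) - w ^ (n + 1) = z * (z ^ n - w ^ n) + (z - w) * w ^ n := by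
      rw [pow_succ', pow_succ']; noncomm_ring
    have hwn : ‖w ^ n‖ ≤ ρ ^ n := (norm_pow_le w n).trans (pow_le_pow_left₀ (norm_nonneg w) hw n)
    have hstep : ‖z ^ (n + 1) - w ^ (n + 1)‖ ≤ ρ * ‖z ^ n - w ^ n‖ + ‖z - w‖ * ρ ^ n := by
      rw [hsplit]
      refine (norm_add_le _ _).trans (add_le_add ?_ ?_)
      · exact (norm_mul_le _ _).trans (mul_le_mul_of_nonneg_right hz (norm_nonneg _))
      · exact (norm_mul_le _ _).trans (mul_le_mul_of_nonneg_left hwn (norm_nonneg _))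
    calc ρ * ‖z ^ (n + 1) - w ^ (n + 1)‖
        ≤ ρ * (ρ * ‖z ^ n - w ^ n‖ + ‖z - w‖ * ρ ^ n) := mul_le_mul_of_nonneg_left hstep hρ
      _ ≤ ρ * (n * ρ ^ n * ‖z - w‖) + ρ ^ (n + 1) * ‖z - w‖ := by
        rw [mul_add, pow_succ]
        nlinarith [mul_le_mul_of_nonneg_left ih hρ]
      _ = ((n + 1 : ℕ) : ℝ) * ρ ^ (n + 1) * ‖z - w‖ := by push_cast; ring

lemma norm_pow_add_mul_pow_sub {z w : 𝕜} (hzw : ‖w‖ = ‖z‖) (p n : ℕ) :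
    ‖z ^ (p + n) * w ^ p - w ^ (p + n) * z ^ p‖ = ‖z‖ ^ (2 * p) * ‖z ^ n - w ^ n‖ := by
  have h : z ^ (p + n) * w ^ p - w ^ (p + n) * z ^ p = (z * w) ^ p * (z ^ n - w ^ n) := by ring
  rw [h, norm_mul, norm_pow, norm_mul, hzw, ← sq, ← pow_mul, mul_comm 2]

lemma mul_norm_pow_mul_pow_sub_le {z w : 𝕜} (hzw : ‖w‖ = ‖z‖) (k p : ℕ) :
    ‖z‖ * ‖z ^ k * w ^ p - w ^ k * z ^ p‖ ≤ |(k : ℝ) - p| * ‖z‖ ^ (k + p) * ‖z - w‖ := by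
  wlog hpk : p ≤ k generalizing k p
  · have h := this p k (by omega)
    rwa [norm_sub_rev (z ^ p * w ^ k), abs_sub_comm, add_comm, mul_comm (w ^ p), mul_comm (z ^ p)]
      at h
  obtain ⟨n, rfl⟩ := Nat.exists_eq_add_of_le hpk
  have hpow := mul_norm_pow_sub_pow_le le_rfl hzw.le n
  rw [norm_pow_add_mul_pow_sub hzw]
  push_cast
  rw [show (p : ℝ) + n - p = n by ring, abs_of_nonneg n.cast_nonneg]
  calc ‖z‖ * (‖z‖ ^ (2 * p) * ‖z ^ n - w ^ n‖)
      = ‖z‖ ^ (2 * p) * (‖z‖ * ‖z ^ n - w ^ n‖) := by ring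
    _ ≤ ‖z‖ ^ (2 * p) * (n * ‖z‖ ^ n * ‖z - w‖) := by gcongr
    _ = n * ‖z‖ ^ (p + n + p) * ‖z - w‖ := by ring

lemma mul_norm_pow_mul_pow_sub_eq_of_adjacent {z w : 𝕜} (hzw : ‖w‖ = ‖z‖) {j p : ℕ}
    (hpj : j = p + 1 ∨ p = j + 1) :
    ‖z‖ * ‖z ^ j * w ^ p - w ^ j * z ^ p‖ = ‖z‖ ^ (j + p) * ‖z - w‖ := by
  rcases hpj with rfl | rfl
  · rw [norm_pow_add_mul_pow_sub hzw, pow_one, pow_one]; ring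
  · rw [norm_sub_rev (z ^ j * w ^ (j + 1)), mul_comm (w ^ j), mul_comm (z ^ j),
      norm_pow_add_mul_pow_sub hzw, pow_one, pow_one, norm_sub_rev]
    ring

lemma two_mul_norm_le_tsum_norm_of_hasSum_zero {E ι : Type*} [NormedAddCommGroup E] {f : ι → E}
    (hf : HasSum f 0) (hnorm : Summable fun i => ‖f i‖) (j : ι) :
    2 * ‖f j‖ ≤ ∑' i, ‖f i‖ := by
  classical
  have hrest : Summable fun i => ‖if i = j then 0 else f i‖ :=
    hnorm.of_nonneg_of_le (fun _ => norm_nonneg _) fun i => by split_ifs <;> simp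
  have hfj : f j = -∑' i, if i = j then 0 else f i := by
    have := hf.summable.tsum_eq_add_tsum_ite j
    rw [hf.tsum_eq] at this
    linear_combination (norm := module) -this
  have hsplit := hnorm.tsum_eq_add_tsum_ite j
  have hite : (fun i => ‖if i = j then 0 else f i‖) = fun i => if i = j then 0 else ‖f i‖ := by
    ext i; split_ifs <;> simp
  calc 2 * ‖f j‖ = ‖f j‖ + ‖∑' i, if i = j then 0 else f i‖ := by rw [hfj, norm_neg]; ring
    _ ≤ ‖f j‖ + ∑' i, ‖if i = j then 0 else f i‖ := by gcongr; exact norm_tsum_le_tsum_norm hrest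
    _ = ∑' i, ‖f i‖ := by rw [hite, hsplit]

theorem eq_of_hasSum_eq_zero_of_tsum_lt {a : ℕ → 𝕜} {z w : 𝕜}
    (hz : HasSum (fun k => a k * z ^ k) 0) (hw : HasSum (fun k => a k * w ^ k) 0)
    (hzw : ‖w‖ = ‖z‖) {j p : ℕ} (hpj : j = p + 1 ∨ p = j + 1)
    (hsum : Summable fun k : ℕ => |(k : ℝ) - p| * (‖a k‖ * ‖z‖ ^ k))
    (hlt : ∑' k : ℕ, |(k : ℝ) - p| * (‖a k‖ * ‖z‖ ^ k) < 2 * (‖a j‖ * ‖z‖ ^ j)) :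
    z = w := by
  set r := ‖z‖
  rcases (norm_nonneg z).eq_or_lt with hr | hr
  · rw [norm_eq_zero.mp hr.symm, norm_eq_zero.mp (hzw.trans hr.symm)]
  set D : ℕ → 𝕜 := fun k => a k * (z ^ k * w ^ p - w ^ k * z ^ p)
  have hD : HasSum D 0 := by
    have hfun : D = fun k => a k * z ^ k * w ^ p - a k * w ^ k * z ^ p := by
      ext k; simp only [D]; ring
    simpa [hfun] using (hz.mul_right (w ^ p)).sub (hw.mul_right (z ^ p))
  have hDle : ∀ k, r * ‖D k‖ ≤ (r ^ p * ‖z - w‖) * (|(k : ℝ) - p| * (‖a k‖ * r ^ k)) := by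
    intro k
    calc r * ‖D k‖ = ‖a k‖ * (r * ‖z ^ k * w ^ p - w ^ k * z ^ p‖) := by
          simp only [D, norm_mul]; ring
      _ ≤ ‖a k‖ * (|(k : ℝ) - p| * r ^ (k + p) * ‖z - w‖) :=
          mul_le_mul_of_nonneg_left (mul_norm_pow_mul_pow_sub_le hzw k p) (norm_nonneg _)
      _ = (r ^ p * ‖z - w‖) * (|(k : ℝ) - p| * (‖a k‖ * r ^ k)) := by ring
  have hDsum : Summable fun k => ‖D k‖ := by
    refine ((hsum.mul_left (r ^ p * ‖z - w‖)).div_const r).of_nonneg_of_le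
      (fun _ => norm_nonneg _) fun k => ?_
    rw [le_div_iff₀ hr, mul_comm]; exact hDle k
  have hDj : r * ‖D j‖ = (r ^ p * ‖z - w‖) * (‖a j‖ * r ^ j) := by
    simp only [D, norm_mul]
    rw [mul_left_comm, mul_norm_pow_mul_pow_sub_eq_of_adjacent hzw hpj]; ring
  have key : (r ^ p * ‖z - w‖) * (2 * (‖a j‖ * r ^ j))
      ≤ (r ^ p * ‖z - w‖) * ∑' k : ℕ, |(k : ℝ) - p| * (‖a k‖ * r ^ k) := by
    calc (r ^ p * ‖z - w‖) * (2 * (‖a j‖ * r ^ j)) = r * (2 * ‖D j‖) := by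
          rw [mul_left_comm r 2, hDj]; ring
      _ ≤ r * ∑' k, ‖D k‖ := by gcongr; exact two_mul_norm_le_tsum_norm_of_hasSum_zero hD hDsum j
      _ = ∑' k, r * ‖D k‖ := (tsum_mul_left).symm
      _ ≤ ∑' k : ℕ, (r ^ p * ‖z - w‖) * (|(k : ℝ) - p| * (‖a k‖ * r ^ k)) :=
          (hDsum.mul_left r).tsum_le_tsum hDle (hsum.mul_left _)
      _ = (r ^ p * ‖z - w‖) * ∑' k : ℕ, |(k : ℝ) - p| * (‖a k‖ * r ^ k) := tsum_mul_left
  by_contra hne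
  have hpos : 0 < r ^ p * ‖z - w‖ := mul_pos (pow_pos hr p) (norm_pos_iff.mpr (sub_ne_zero.mpr hne))
  exact absurd (le_of_mul_le_mul_left key hpos) (not_le.mpr hlt)

end Separation

lemma summable_and_tsum_le_of_split {f g h : ℕ → ℝ} (N : ℕ) (hf : ∀ k, 0 ≤ f k)
    (hg : Summable g) (hg0 : ∀ m, 0 ≤ g m) (hh : Summable h)
    (hfg : ∀ n m, n + 1 + m = N → f n ≤ g m) (hfh : ∀ m, f (N + 1 + m) ≤ h m) :
    Summable f ∧ ∑' k, f k ≤ ∑' m, g m + f N + ∑' m, h m := by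
  have htail : Summable fun m => f (m + (N + 1)) :=
    hh.of_nonneg_of_le (fun m => hf _) fun m => by rw [add_comm]; exact hfh m
  have hfs : Summable f := (summable_nat_add_iff (N + 1)).mp htail
  refine ⟨hfs, ?_⟩
  have hhead : ∑ k ∈ range N, f k ≤ ∑' m, g m := by
    rw [← sum_range_reflect]
    calc ∑ m ∈ range N, f (N - 1 - m) ≤ ∑ m ∈ range N, g m :=
          sum_le_sum fun m hm => hfg _ _ (by have := mem_range.mp hm; omega)
      _ ≤ ∑' m, g m := hg.sum_le_tsum _ fun m _ => hg0 m
  have htail_le : ∑' m, f (m + (N + 1)) ≤ ∑' m, h m :=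
    htail.tsum_le_tsum (fun m => by rw [add_comm]; exact hfh m) hh
  rw [← hfs.sum_add_tsum_nat_add (N + 1), sum_range_succ]
  linarith

def thetaTerm (q r : ℝ) (k : ℕ) : ℝ := q ^ (k ^ 2) * r ^ k

section Theta

variable {q r : ℝ}

lemma thetaTerm_pos (hq : 0 < q) (hr : 0 < r) (k : ℕ) : 0 < thetaTerm q r k := by
  unfold thetaTerm; positivity

lemma thetaTerm_nonneg (hq : 0 ≤ q) (hr : 0 ≤ r) (k : ℕ) : 0 ≤ thetaTerm q r k := by
  unfold thetaTerm; positivity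

lemma summable_thetaTerm (hq0 : 0 ≤ q) (hq1 : q < 1) (r : ℝ) : Summable (thetaTerm q r) := by
  have hlim : Tendsto (fun k : ℕ => q ^ k * |r|) atTop (𝓝 0) := by
    simpa using (tendsto_pow_atTop_nhds_zero_of_lt_one hq0 hq1).mul_const |r|
  refine .of_norm_bounded_eventually_nat summable_geometric_two ?_
  filter_upwards [hlim.eventually (ge_mem_nhds (by norm_num : (0 : ℝ) < 1 / 2))] with k hk
  rw [thetaTerm, norm_mul, norm_pow, norm_pow, Real.norm_of_nonneg hq0, Real.norm_eq_abs, sq,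
    pow_mul, ← mul_pow]
  exact pow_le_pow_left₀ (by positivity) hk k

lemma thetaTerm_add_succ_le (hq : 0 ≤ q) (hr : 0 ≤ r) {N : ℕ} (h : q ^ (2 * N) * r ≤ 1)
    (m : ℕ) : thetaTerm q r (N + 1 + m) ≤ thetaTerm q r N * q ^ ((m + 1) ^ 2) := by
  have hid : thetaTerm q r (N + 1 + m)
      = thetaTerm q r N * q ^ ((m + 1) ^ 2) * (q ^ (2 * N) * r) ^ (m + 1) := by
    unfold thetaTerm; ring
  rw [hid]
  exact mul_le_of_le_one_right (by unfold thetaTerm; positivity) (pow_le_one₀ (by positivity) h)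

lemma thetaTerm_add_succ_le' (hq : 0 ≤ q) (hr : 0 ≤ r) {N : ℕ} (h : q ^ (2 * N + 1) * r ≤ 1)
    (m : ℕ) : thetaTerm q r (N + 1 + m) ≤ thetaTerm q r N * q ^ (m * (m + 1)) := by
  have hid : thetaTerm q r (N + 1 + m)
      = thetaTerm q r N * q ^ (m * (m + 1)) * (q ^ (2 * N + 1) * r) ^ (m + 1) := by
    unfold thetaTerm; ring
  rw [hid]
  exact mul_le_of_le_one_right (by unfold thetaTerm; positivity) (pow_le_one₀ (by positivity) h)

lemma thetaTerm_le_add_succ (hq : 0 ≤ q) (hr : 0 ≤ r) {n m : ℕ}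
    (h : 1 ≤ q ^ (2 * (n + 1 + m)) * r) :
    thetaTerm q r n ≤ thetaTerm q r (n + 1 + m) * q ^ ((m + 1) ^ 2) := by
  calc thetaTerm q r n ≤ thetaTerm q r n * (q ^ (2 * (n + 1 + m)) * r) ^ (m + 1) :=
        le_mul_of_one_le_right (thetaTerm_nonneg hq hr n) (one_le_pow₀ h)
    _ = thetaTerm q r (n + 1 + m) * q ^ ((m + 1) ^ 2) := by unfold thetaTerm; ring

lemma thetaTerm_le_add_succ' (hq : 0 ≤ q) (hr : 0 ≤ r) {n m : ℕ}
    (h : 1 ≤ q ^ (2 * (n + m) + 1) * r) :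
    thetaTerm q r n ≤ thetaTerm q r (n + 1 + m) * q ^ (m * (m + 1)) := by
  calc thetaTerm q r n ≤ thetaTerm q r n * (q ^ (2 * (n + m) + 1) * r) ^ (m + 1) :=
        le_mul_of_one_le_right (thetaTerm_nonneg hq hr n) (one_le_pow₀ h)
    _ = thetaTerm q r (n + 1 + m) * q ^ (m * (m + 1)) := by unfold thetaTerm; ring

lemma summable_weights_and_tsum_lt_one (hq0 : 0 ≤ q) (hq : q ≤ 1 / 3) :
    Summable (fun m : ℕ => ((m : ℝ) + 2) * q ^ ((m + 1) ^ 2)) ∧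
    Summable (fun m : ℕ => (m : ℝ) * q ^ (m * (m + 1))) ∧
    ∑' m : ℕ, ((m : ℝ) + 2) * q ^ ((m + 1) ^ 2) + ∑' m : ℕ, (m : ℝ) * q ^ (m * (m + 1)) < 1 := by
  have hx : ‖(1 / 9 : ℝ)‖ < 1 := by norm_num
  have hlin := hasSum_coe_mul_geometric_of_norm_lt_one hx
  have hgeo := hasSum_geometric_of_lt_one (r := (1 / 9 : ℝ)) (by norm_num) (by norm_num)
  have hpow : ∀ {e : ℕ} (d : ℕ), d ≤ e → q ^ e ≤ (1 / 3 : ℝ) ^ d := fun d hd =>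
    (pow_le_pow_left₀ hq0 hq _).trans (pow_le_pow_of_le_one (by norm_num) (by norm_num) hd)
  have hnear : ∀ m : ℕ, ((m : ℝ) + 2) * q ^ ((m + 1) ^ 2)
      ≤ 1 / 3 * ((m : ℝ) * (1 / 9) ^ m) + 2 / 3 * (1 / 9 : ℝ) ^ m := fun m => by
    have h : q ^ ((m + 1) ^ 2) ≤ 1 / 3 * (1 / 9 : ℝ) ^ m :=
      (hpow (2 * m + 1) (by nlinarith)).trans_eq (by rw [pow_succ, pow_mul]; norm_num; ring)
    nlinarith [pow_nonneg (by norm_num : (0 : ℝ) ≤ 1 / 9) m]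
  have hfar : ∀ m : ℕ, (m : ℝ) * q ^ (m * (m + 1)) ≤ (m : ℝ) * (1 / 9) ^ m := fun m => by
    have h : q ^ (m * (m + 1)) ≤ (1 / 9 : ℝ) ^ m :=
      (hpow (2 * m) (by nlinarith [Nat.le_mul_self m])).trans_eq (by rw [pow_mul]; norm_num)
    exact mul_le_mul_of_nonneg_left h m.cast_nonneg
  have hnear_sum := (hlin.mul_left (1 / 3)).add (hgeo.mul_left (2 / 3))
  have hsn : Summable (fun m : ℕ => ((m : ℝ) + 2) * q ^ ((m + 1) ^ 2)) :=
    hnear_sum.summable.of_nonneg_of_le (fun m => by positivity) hnear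
  have hsf : Summable (fun m : ℕ => (m : ℝ) * q ^ (m * (m + 1))) :=
    hlin.summable.of_nonneg_of_le (fun m => by positivity) hfar
  refine ⟨hsn, hsf, ?_⟩
  have h1 := hasSum_le hnear hsn.hasSum hnear_sum
  have h2 := hasSum_le hfar hsf.hasSum hlin
  norm_num at h1 h2
  linarith

lemma tsum_abs_sub_succ_mul_thetaTerm_lt (hq0 : 0 < q) (hq : q ≤ 1 / 3) (hr : 0 < r) {N : ℕ}
    (hup : q ^ (2 * N + 1) * r ≤ 1) (hlow : 0 < N → 1 ≤ q ^ (2 * N) * r) :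
    Summable (fun k : ℕ => |(k : ℝ) - (N + 1 : ℕ)| * thetaTerm q r k) ∧
    ∑' k : ℕ, |(k : ℝ) - (N + 1 : ℕ)| * thetaTerm q r k < 2 * thetaTerm q r N := by
  obtain ⟨hnear, hfar, hlt⟩ := summable_weights_and_tsum_lt_one hq0.le hq
  have hT := thetaTerm_pos hq0 hr N
  have hbelow : ∀ n m, n + 1 + m = N → |(n : ℝ) - (N + 1 : ℕ)| * thetaTerm q r n
      ≤ thetaTerm q r N * (((m : ℝ) + 2) * q ^ ((m + 1) ^ 2)) := by
    intro n m hnm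
    have hw : |(n : ℝ) - (N + 1 : ℕ)| = m + 2 := by
      rw [← hnm]; push_cast
      rw [show (n : ℝ) - (n + 1 + m + 1) = -(m + 2) by ring, abs_neg, abs_of_pos (by positivity)]
    rw [hw, mul_left_comm]
    refine mul_le_mul_of_nonneg_left ?_ (by positivity)
    subst hnm
    exact thetaTerm_le_add_succ hq0.le hr.le (hlow (by omega))
  have habove : ∀ m, |((N + 1 + m : ℕ) : ℝ) - (N + 1 : ℕ)| * thetaTerm q r (N + 1 + m)
      ≤ thetaTerm q r N * ((m : ℝ) * q ^ (m * (m + 1))) := by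
    intro m
    have hw : |((N + 1 + m : ℕ) : ℝ) - (N + 1 : ℕ)| = m := by
      push_cast; rw [show (N : ℝ) + 1 + m - (N + 1) = m by ring, abs_of_nonneg m.cast_nonneg]
    rw [hw, mul_left_comm]
    exact mul_le_mul_of_nonneg_left (thetaTerm_add_succ_le' hq0.le hr.le hup m) m.cast_nonneg
  obtain ⟨hs, hle⟩ := summable_and_tsum_le_of_split N
    (fun k => mul_nonneg (abs_nonneg _) (thetaTerm_nonneg hq0.le hr.le k))
    (hnear.mul_left _) (fun m => by positivity) (hfar.mul_left _) hbelow habove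
  refine ⟨hs, hle.trans_lt ?_⟩
  rw [tsum_mul_left, tsum_mul_left]
  push_cast
  rw [show (N : ℝ) - (N + 1) = -1 by ring, abs_neg, abs_one, one_mul]
  nlinarith [mul_lt_mul_of_pos_left hlt hT]

lemma tsum_abs_sub_mul_thetaTerm_lt_succ (hq0 : 0 < q) (hq : q ≤ 1 / 3) (hr : 0 < r) {p : ℕ}
    (hlow : 1 ≤ q ^ (2 * p + 1) * r) (hup : q ^ (2 * (p + 1)) * r ≤ 1) :
    Summable (fun k : ℕ => |(k : ℝ) - p| * thetaTerm q r k) ∧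
    ∑' k : ℕ, |(k : ℝ) - p| * thetaTerm q r k < 2 * thetaTerm q r (p + 1) := by
  obtain ⟨hnear, hfar, hlt⟩ := summable_weights_and_tsum_lt_one hq0.le hq
  have hT := thetaTerm_pos hq0 hr (p + 1)
  have hbelow : ∀ n m, n + 1 + m = p + 1 → |(n : ℝ) - p| * thetaTerm q r n
      ≤ thetaTerm q r (p + 1) * ((m : ℝ) * q ^ (m * (m + 1))) := by
    intro n m hnm
    obtain rfl : p = n + m := by omega
    have hw : |(n : ℝ) - (n + m : ℕ)| = m := by
      push_cast; rw [show (n : ℝ) - (n + m) = -m by ring, abs_neg, abs_of_nonneg m.cast_nonneg]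
    rw [hw, mul_left_comm, ← hnm]
    exact mul_le_mul_of_nonneg_left (thetaTerm_le_add_succ' hq0.le hr.le hlow) m.cast_nonneg
  have habove : ∀ m, |((p + 1 + 1 + m : ℕ) : ℝ) - p| * thetaTerm q r (p + 1 + 1 + m)
      ≤ thetaTerm q r (p + 1) * (((m : ℝ) + 2) * q ^ ((m + 1) ^ 2)) := by
    intro m
    have hw : |((p + 1 + 1 + m : ℕ) : ℝ) - p| = m + 2 := by
      push_cast
      rw [show (p : ℝ) + 1 + 1 + m - p = m + 2 by ring, abs_of_pos (by positivity)]
    rw [hw, mul_left_comm]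
    exact mul_le_mul_of_nonneg_left (thetaTerm_add_succ_le hq0.le hr.le hup m) (by positivity)
  obtain ⟨hs, hle⟩ := summable_and_tsum_le_of_split (p + 1)
    (fun k => mul_nonneg (abs_nonneg _) (thetaTerm_nonneg hq0.le hr.le k))
    (hfar.mul_left _) (fun m => by positivity) (hnear.mul_left _) hbelow habove
  refine ⟨hs, hle.trans_lt ?_⟩
  rw [tsum_mul_left, tsum_mul_left]
  push_cast
  rw [show (p : ℝ) + 1 - p = 1 by ring, abs_one, one_mul]
  nlinarith [mul_lt_mul_of_pos_left hlt hT]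

lemma exists_adjacent_tsum_abs_sub_mul_thetaTerm_lt (hq0 : 0 < q) (hq : q ≤ 1 / 3) (hr : 0 < r) :
    ∃ j p : ℕ, (j = p + 1 ∨ p = j + 1) ∧
      Summable (fun k : ℕ => |(k : ℝ) - p| * thetaTerm q r k) ∧
      ∑' k : ℕ, |(k : ℝ) - p| * thetaTerm q r k < 2 * thetaTerm q r j := by
  classical
  -- With `K` least such that `q ^ K * r ≤ 1`, a maximal term has index `⌊K / 2⌋`.
  have hex : ∃ K : ℕ, q ^ K * r ≤ 1 := by
    obtain ⟨K, hK⟩ := exists_pow_lt_of_lt_one (inv_pos.mpr hr) (hq.trans_lt (by norm_num))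
    exact ⟨K, ((mul_lt_mul_of_pos_right hK hr).trans_eq (inv_mul_cancel₀ hr.ne')).le⟩
  have hK := Nat.find_spec hex
  have hmin : ∀ k < Nat.find hex, 1 < q ^ k * r := fun k hk => not_le.mp (Nat.find_min hex hk)
  obtain ⟨c, hc | hc⟩ := Nat.even_or_odd' (Nat.find hex)
  · rcases c with _ | p
    · refine ⟨0, 1, Or.inr rfl, tsum_abs_sub_succ_mul_thetaTerm_lt hq0 hq hr ?_ (by omega)⟩
      have hr1 : r ≤ 1 := by simpa [hc] using hK
      simpa using (mul_le_of_le_one_left hr.le (by linarith : q ≤ 1)).trans hr1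
    · refine ⟨p + 1, p, Or.inl rfl, tsum_abs_sub_mul_thetaTerm_lt_succ hq0 hq hr
        (hmin _ (by omega)).le (by rwa [hc] at hK)⟩
  · exact ⟨c, c + 1, Or.inr rfl, tsum_abs_sub_succ_mul_thetaTerm_lt hq0 hq hr (by rwa [hc] at hK)
      fun _ => (hmin _ (by omega)).le⟩

end Theta

lemma hasSum_ofReal_mul_conj_pow {c : ℕ → ℝ} {z s : ℂ} (h : HasSum (fun k => (c k : ℂ) * z ^ k) s) :
    HasSum (fun k => (c k : ℂ) * conj z ^ k) (conj s) := by
  simpa only [map_mul, map_pow, conj_ofReal] using hasSum_conj'.mpr h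

lemma norm_ofReal_sign_mul_exp {s α : ℝ} (hs : s = 1 ∨ s = -1) (k : ℕ) :
    ‖((s * Real.exp (-(α * k ^ 2)) : ℝ) : ℂ)‖ = Real.exp (-α) ^ (k ^ 2) := by
  have habs : |s| = 1 := by rcases hs with rfl | rfl <;> norm_num
  rw [norm_real, Real.norm_eq_abs, abs_mul, habs, one_mul, abs_of_pos (Real.exp_pos _),
    ← Real.exp_nat_mul]
  push_cast; ring_nf

/-- For `f(z) = Σ_k ξ_k e^{-αk²} z^k` with arbitrary signs `ξ_k ∈ {±1}` and `α ≥ log 3`,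
all zeros of `f` are real. -/
theorem stmt_11 (α : ℝ) (hα : Real.log 3 ≤ α) (ξ : ℕ → ℝ) (hξ : ∀ k, ξ k = 1 ∨ ξ k = -1)
    (f : ℂ → ℂ)
    (hf : ∀ z, f z = ∑' k : ℕ, ((ξ k * Real.exp (-(α * k ^ 2)) : ℝ) : ℂ) * z ^ k) :
    ∀ z : ℂ, f z = 0 → z.im = 0 := by
  intro z hz
  rcases eq_or_ne z 0 with rfl | hz0
  · simp
  set q := Real.exp (-α)
  have hq0 : 0 < q := Real.exp_pos _
  have hq : q ≤ 1 / 3 := by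
    calc q ≤ Real.exp (-Real.log 3) := Real.exp_le_exp.mpr (by linarith)
      _ = 1 / 3 := by rw [Real.exp_neg, Real.exp_log (by norm_num), one_div]
  set a : ℕ → ℂ := fun k => ((ξ k * Real.exp (-(α * k ^ 2)) : ℝ) : ℂ)
  have hnorm : ∀ (u : ℂ) (k : ℕ), ‖a k‖ * ‖u‖ ^ k = thetaTerm q ‖u‖ k := fun u k => by
    rw [thetaTerm, norm_ofReal_sign_mul_exp (hξ k)]
  have hzsum : HasSum (fun k => a k * z ^ k) 0 := by
    have hs : Summable fun k => a k * z ^ k := .of_norm <| by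
      simpa only [norm_mul, norm_pow, hnorm] using
        summable_thetaTerm hq0.le (hq.trans_lt (by norm_num)) ‖z‖
    have h := hs.hasSum
    rwa [← hf z, hz] at h
  have hwsum := hasSum_ofReal_mul_conj_pow hzsum
  rw [map_zero] at hwsum
  obtain ⟨j, p, hpj, hs, hlt⟩ :=
    exists_adjacent_tsum_abs_sub_mul_thetaTerm_lt hq0 hq (norm_pos_iff.mpr hz0)
  simp only [← hnorm] at hs hlt
  exact conj_eq_iff_im.mp
    (eq_of_hasSum_eq_zero_of_tsum_lt hzsum hwsum (RCLike.norm_conj z) hpj hs hlt).symm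
end

section
/- Fix n ∈ ℕ and natural numbers j_1 < j_2 < ⋯ < j_{n−1}, and ρ > 0. Then there exist n points z_1,…,z_n on the circle {|z| = ρ} such that the generalized Vandermonde determinant det A, where A is the n×n matrix with rows (1, z_m^{j_1}, …, z_m^{j_{n−1}}) for m = 1,…,n, satisfies |det A| ≥ ρ^{j_1 + ⋯ + j_{n−1}}. -/
/-!
Average over a grid of roots of unity instead of the torus. Let `ζ` be a primitive `N`-th root
of unity with `N > ∑ i, e i` and put `z_m = ρ ζ ^ k_m` for `k ∈ (Fin N)ⁿ`. Expanding over
permutations, `det A = ρ ^ (∑ i, e i) ∑_σ sign σ ∏_m ζ ^ (e (σ m) k_m)`; the characters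
`k ↦ ∏_m ζ ^ (e (σ m) k_m)` are pairwise orthogonal on the grid because `e` is injective with
values below `N`. Hence the mean of `‖det A‖²` over the grid is `n! ρ ^ (2 ∑ i, e i)`, and
some grid point has `‖det A‖ ≥ ρ ^ (∑ i, e i)`.
-/

open Complex ComplexConjugate Finset Matrix

namespace Matrix

variable {ι R : Type*} [Fintype ι] [DecidableEq ι] [CommRing R]

theorem det_of_pow (z : ι → R) (e : ι → ℕ) :
    det (of fun m i => z m ^ e i) =
      ∑ σ : Equiv.Perm ι, (Equiv.Perm.sign σ : R) * ∏ m, z m ^ e (σ m) := by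
  rw [← det_transpose, det_apply']
  rfl

theorem det_of_mul_pow_pow (ρ ζ : R) (e k : ι → ℕ) :
    det (of fun m i => (ρ * ζ ^ k m) ^ e i) =
      ∑ σ : Equiv.Perm ι,
        (Equiv.Perm.sign σ * ρ ^ ∑ i, e i) * ∏ m, ζ ^ (e (σ m) * k m) := by
  rw [det_of_pow]
  refine sum_congr rfl fun σ _ => ?_
  simp_rw [mul_pow, prod_mul_distrib]
  rw [prod_pow_eq_pow_sum, Equiv.sum_comp σ e, mul_assoc]
  simp_rw [← pow_mul, mul_comm (k _)]

end Matrix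

namespace IsPrimitiveRoot

variable {N : ℕ} {ζ : ℂ} {ι κ : Type*} [Fintype ι] [DecidableEq ι] [Fintype κ]

theorem sum_pow_mul_conj_pow (hζ : IsPrimitiveRoot ζ N) {a b : ℕ} (ha : a < N) (hb : b < N) :
    ∑ j : Fin N, ζ ^ (a * j) * conj (ζ ^ (b * j)) = if a = b then (N : ℂ) else 0 := by
  have hN : N ≠ 0 := by omega
  have hζ0 : ζ ≠ 0 := hζ.ne_zero hN
  have hconj : conj ζ = ζ⁻¹ := (inv_eq_conj (norm_eq_one_of_pow_eq_one hζ.pow_eq_one hN)).symm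
  set x := ζ ^ a * (ζ ^ b)⁻¹
  have hterm (j : ℕ) : ζ ^ (a * j) * conj (ζ ^ (b * j)) = x ^ j := by
    rw [map_pow, hconj, mul_pow, inv_pow, ← pow_mul, inv_pow, ← pow_mul]
  rw [Fin.sum_univ_eq_sum_range (fun j => ζ ^ (a * j) * conj (ζ ^ (b * j))),
    sum_congr rfl fun j _ => hterm j]
  split_ifs with hab
  · simp [x, hab, hζ0]
  · have hx1 : x ≠ 1 := fun h =>
      hab (hζ.pow_inj ha hb ((mul_inv_eq_one₀ (pow_ne_zero _ hζ0)).mp h))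
    have hxN : x ^ N = 1 := by
      rw [mul_pow, inv_pow, ← pow_mul, ← pow_mul, mul_comm a, mul_comm b, pow_mul, pow_mul,
        hζ.pow_eq_one, one_pow, one_pow, inv_one, mul_one]
    rw [geom_sum_eq hx1, hxN, sub_self, zero_div]

theorem sum_prod_pow_mul_conj_prod_pow (hζ : IsPrimitiveRoot ζ N) {a b : ι → ℕ}
    (ha : ∀ m, a m < N) (hb : ∀ m, b m < N) :
    ∑ k : ι → Fin N, (∏ m, ζ ^ (a m * k m)) * conj (∏ m, ζ ^ (b m * k m)) =
      if a = b then (N : ℂ) ^ Fintype.card ι else 0 := by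
  simp_rw [map_prod, ← prod_mul_distrib]
  rw [← Fintype.prod_sum (fun m (j : Fin N) => ζ ^ (a m * j) * conj (ζ ^ (b m * j)))]
  simp_rw [hζ.sum_pow_mul_conj_pow (ha _) (hb _)]
  split_ifs with hab
  · simp [hab]
  · obtain ⟨m, hm⟩ := Function.ne_iff.mp hab
    exact prod_eq_zero (mem_univ m) (if_neg hm)

theorem sum_norm_sq_sum_mul_prod_pow (hζ : IsPrimitiveRoot ζ N) (c : κ → ℂ)
    {a : κ → ι → ℕ} (ha : Function.Injective a) (haN : ∀ i m, a i m < N) :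
    ∑ k : ι → Fin N, ‖∑ i, c i * ∏ m, ζ ^ (a i m * k m)‖ ^ 2 =
      (N : ℝ) ^ Fintype.card ι * ∑ i, ‖c i‖ ^ 2 := by
  classical
  set χ : κ → (ι → Fin N) → ℂ := fun i k => ∏ m, ζ ^ (a i m * k m)
  have horth (i j : κ) :
      ∑ k, χ i k * conj (χ j k) = if i = j then (N : ℂ) ^ Fintype.card ι else 0 := by
    rw [hζ.sum_prod_pow_mul_conj_prod_pow (haN i) (haN j)]
    exact if_congr ha.eq_iff rfl rfl
  apply Complex.ofReal_injective
  push_cast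
  simp_rw [← mul_conj']
  calc ∑ k, (∑ i, c i * χ i k) * conj (∑ j, c j * χ j k)
      = ∑ i, ∑ j, c i * conj (c j) * ∑ k, χ i k * conj (χ j k) := by
        simp_rw [map_sum, map_mul, sum_mul_sum, mul_sum, mul_mul_mul_comm (c _)]
        rw [sum_comm]
        exact sum_congr rfl fun i _ => sum_comm
    _ = (N : ℂ) ^ Fintype.card ι * ∑ i, c i * conj (c i) := by
        simp_rw [horth, mul_ite, mul_zero, sum_ite_eq, mem_univ, if_true, mul_sum, mul_comm]

theorem sum_norm_sq_det_of_mul_pow_pow (hζ : IsPrimitiveRoot ζ N) (ρ : ℝ) {e : ι → ℕ}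
    (he : Function.Injective e) (heN : ∀ i, e i < N) :
    ∑ k : ι → Fin N, ‖det (of fun m i => ((ρ : ℂ) * ζ ^ (k m : ℕ)) ^ e i)‖ ^ 2 =
      (N : ℝ) ^ Fintype.card ι * ((Fintype.card ι).factorial * ρ ^ (2 * ∑ i, e i)) := by
  simp_rw [det_of_mul_pow_pow]
  rw [hζ.sum_norm_sq_sum_mul_prod_pow _
    (fun σ τ h => Equiv.ext fun m => he (congr_fun h m)) fun σ m => heN (σ m)]
  have hnorm (σ : Equiv.Perm ι) :
      ‖(Equiv.Perm.sign σ : ℂ) * (ρ : ℂ) ^ ∑ i, e i‖ ^ 2 = ρ ^ (2 * ∑ i, e i) := by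
    rw [norm_mul, Complex.norm_intCast, abs_unit_intCast, one_mul, norm_pow, Complex.norm_real,
      Real.norm_eq_abs, ← abs_pow, sq_abs, ← pow_mul, mul_comm]
  simp_rw [hnorm, sum_const, card_univ, Fintype.card_perm, nsmul_eq_mul]

end IsPrimitiveRoot

theorem stmt_13_general (n : ℕ) (e : Fin n → ℕ) (he : StrictMono e) (ρ : ℝ) (hρ : 0 < ρ) :
    ∃ z : Fin n → ℂ, (∀ m, ‖z m‖ = ρ) ∧
      ρ ^ (∑ i, e i) ≤ ‖Matrix.det (Matrix.of fun m i : Fin n => z m ^ e i)‖ := by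
  set N := ∑ i, e i + 1
  have hN : N ≠ 0 := Nat.add_one_ne_zero _
  have heN (i : Fin n) : e i < N :=
    Nat.lt_succ_of_le (single_le_sum (fun _ _ => Nat.zero_le _) (mem_univ i))
  have hζ := Complex.isPrimitiveRoot_exp N hN
  set z : (Fin n → Fin N) → Fin n → ℂ :=
    fun k m => ρ * exp (2 * Real.pi * I / N) ^ (k m : ℕ)
  have hz (k : Fin n → Fin N) (m : Fin n) : ‖z k m‖ = ρ := by
    simp [z, norm_eq_one_of_pow_eq_one hζ.pow_eq_one hN, abs_of_pos hρ]
  have hsum : ∑ _k : Fin n → Fin N, (ρ ^ ∑ i, e i) ^ 2 ≤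
      ∑ k, ‖det (of fun m i => z k m ^ e i)‖ ^ 2 := by
    rw [hζ.sum_norm_sq_det_of_mul_pow_pow ρ he.injective heN, sum_const, card_univ,
      Fintype.card_fun, Fintype.card_fin, Fintype.card_fin, nsmul_eq_mul, ← pow_mul,
      mul_comm _ 2]
    push_cast
    gcongr
    exact le_mul_of_one_le_left (by positivity) (by exact_mod_cast n.factorial_pos)
  obtain ⟨k, -, hk⟩ := exists_le_of_sum_le univ_nonempty hsum
  exact ⟨z k, hz k, (pow_le_pow_iff_left₀ (by positivity) (norm_nonneg _) two_ne_zero).mp hk⟩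

/-- Generalized Vandermonde: given exponents `0 = e₀ < e₁ < ⋯ < e_{n-1}` and `ρ > 0`,
there exist `n` points on the circle `{|z| = ρ}` such that the generalized Vandermonde
matrix `A = (z_m^{e_i})` satisfies `|det A| ≥ ρ^{Σ e_i}`. -/
theorem stmt_13 (n : ℕ) (hn : 0 < n) (e : Fin n → ℕ) (he : StrictMono e)
    (h0 : e ⟨0, hn⟩ = 0) (ρ : ℝ) (hρ : 0 < ρ) :
    ∃ z : Fin n → ℂ, (∀ m, ‖z m‖ = ρ) ∧
      ρ ^ (∑ i, e i) ≤ ‖Matrix.det (Matrix.of fun m i : Fin n => z m ^ e i)‖ :=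
  stmt_13_general n e he ρ hρ
end

section
/- Let a_n ≥ 0 with a_0 = 1 and lim (log a_n)/n = −∞. Define N(r) = { n : log(a_n r^n) ≥ 0 }, m(r) = 4·Σ_{n∈N(r)} n, and S(r) = 2·Σ_{n∈N(r)} log(a_n r^n). For 0 < γ < 1/2, S((1−γ)r) ≥ S(r) − γ·m(r). -/
open Real

lemma stmt_18_aux (a : ℕ → ℝ) (ha : ∀ n, 0 ≤ a n)
    (hlim : Filter.Tendsto (fun n : ℕ => Real.log (a n) / n) Filter.atTop Filter.atBot)
    (s : ℝ) (hs : 0 < s) : ∃ N : ℕ, ∀ n ≥ N, a n * s ^ n < 1 := by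
  have h := (Filter.tendsto_atBot.mp hlim (-(Real.log s) - 1)).exists_forall_of_atTop
  obtain ⟨N₀, hN₀⟩ := Filter.eventually_atTop.mp
    (hlim.eventually (Filter.eventually_le_atBot (-(Real.log s) - 1)))
  refine ⟨max N₀ 1, fun n hn => ?_⟩
  have hn1 : 1 ≤ n := le_trans (le_max_right _ _) hn
  have hnN : N₀ ≤ n := le_trans (le_max_left _ _) hn
  rcases eq_or_lt_of_le (ha n) with h0 | h0
  · rw [← h0, zero_mul]; norm_num
  · have hnp : (0 : ℝ) < n := by exact_mod_cast hn1
    have hlog : Real.log (a n) ≤ n * (-(Real.log s) - 1) := by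
      have := hN₀ n hnN
      calc Real.log (a n) = (Real.log (a n) / n) * n := by field_simp
        _ ≤ (-(Real.log s) - 1) * n := by
            apply mul_le_mul_of_nonneg_right this (le_of_lt hnp)
        _ = n * (-(Real.log s) - 1) := by ring
    have hpos : 0 < a n * s ^ n := mul_pos h0 (pow_pos hs n)
    have : Real.log (a n * s ^ n) < 0 := by
      rw [Real.log_mul (ne_of_gt h0) (ne_of_gt (pow_pos hs n)), Real.log_pow]
      nlinarith
    exact (Real.log_neg_iff hpos).mp this

/-- With `S(r) = 2Σ_{n∈N(r)} log(a_n rⁿ)` and `m(r) = 4Σ_{n∈N(r)} n`, where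
`N(r) = {n : a_n rⁿ ≥ 1}`: for `0 < γ < 1/2`, `S((1-γ)r) ≥ S(r) - γ·m(r)`. -/
theorem stmt_18 (a : ℕ → ℝ) (ha : ∀ n, 0 ≤ a n) (ha0 : a 0 = 1)
    (hlim : Filter.Tendsto (fun n : ℕ => Real.log (a n) / n) Filter.atTop Filter.atBot)
    (S m : ℝ → ℝ)
    (hS : ∀ r, S r = 2 * ∑' n : ℕ, max (Real.log (a n * r ^ n)) 0)
    (hm : ∀ r, m r = 4 * ∑' n : ℕ, if 1 ≤ a n * r ^ n then (n : ℝ) else 0)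
    (r γ : ℝ) (hr : 0 < r) (hγ : 0 < γ) (hγ2 : γ < 1 / 2) :
    S r - γ * m r ≤ S ((1 - γ) * r) := by
  have hγ1 : (0:ℝ) < 1 - γ := by linarith
  have hr' : 0 < (1 - γ) * r := mul_pos hγ1 hr
  set f : ℕ → ℝ := fun n => max (Real.log (a n * r ^ n)) 0 with hf
  set f' : ℕ → ℝ := fun n => max (Real.log (a n * ((1 - γ) * r) ^ n)) 0 with hf'
  set g : ℕ → ℝ := fun n => if 1 ≤ a n * r ^ n then (n : ℝ) else 0 with hg
  -- summability
  obtain ⟨N₁, hN₁⟩ := stmt_18_aux a ha hlim r hr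
  obtain ⟨N₂, hN₂⟩ := stmt_18_aux a ha hlim ((1 - γ) * r) hr'
  have hsf : Summable f := by
    apply summable_of_ne_finset_zero (s := Finset.range N₁)
    intro n hn
    simp only [Finset.mem_range, not_lt] at hn
    have := hN₁ n hn
    exact max_eq_right (Real.log_nonpos (mul_nonneg (ha n) (pow_nonneg (le_of_lt hr) n)) (le_of_lt this))
  have hsf' : Summable f' := by
    apply summable_of_ne_finset_zero (s := Finset.range N₂)
    intro n hn
    simp only [Finset.mem_range, not_lt] at hn
    have := hN₂ n hn
    exact max_eq_right (Real.log_nonpos (mul_nonneg (ha n) (pow_nonneg (le_of_lt hr') n)) (le_of_lt this))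
  have hsg : Summable g := by
    apply summable_of_ne_finset_zero (s := Finset.range N₁)
    intro n hn
    simp only [Finset.mem_range, not_lt] at hn
    have := hN₁ n hn
    simp only [hg, if_neg (not_le.mpr this)]
  -- pointwise inequality
  have hpt : ∀ n, f n - 2 * γ * g n ≤ f' n := by
    intro n
    by_cases hc : 1 ≤ a n * r ^ n
    · have hpos : (0:ℝ) < a n * r ^ n := lt_of_lt_of_le one_pos hc
      have han : (0:ℝ) < a n := by
        rcases (ha n).eq_or_lt with h | h
        · rw [← h, zero_mul] at hpos; exact absurd hpos (lt_irrefl 0)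
        · exact h
      have hrn : (0:ℝ) < r ^ n := pow_pos hr n
      have hγn : (0:ℝ) < (1 - γ) ^ n := pow_pos hγ1 n
      have hlogsplit : Real.log (a n * ((1 - γ) * r) ^ n)
          = Real.log (a n * r ^ n) + n * Real.log (1 - γ) := by
        rw [mul_pow, show a n * ((1 - γ) ^ n * r ^ n) = (a n * r ^ n) * (1 - γ) ^ n by ring,
          Real.log_mul (ne_of_gt hpos) (ne_of_gt hγn), Real.log_pow]
      have hlog1 : -(2 * γ) ≤ Real.log (1 - γ) := by
        have h1 : 1 - (1 - γ)⁻¹ ≤ Real.log (1 - γ) := Real.one_sub_inv_le_log_of_pos hγ1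
        have h3 : (1 - γ) * (1 - γ)⁻¹ = 1 := mul_inv_cancel₀ (ne_of_gt hγ1)
        nlinarith
      simp only [hf, hg, hf', if_pos hc]
      rw [max_eq_left (Real.log_nonneg hc)]
      calc Real.log (a n * r ^ n) - 2 * γ * n
          ≤ Real.log (a n * r ^ n) + n * Real.log (1 - γ) := by nlinarith [Nat.cast_nonneg (α := ℝ) n]
        _ = Real.log (a n * ((1 - γ) * r) ^ n) := hlogsplit.symm
        _ ≤ max (Real.log (a n * ((1 - γ) * r) ^ n)) 0 := le_max_left _ _
    · simp only [hf, hg, if_neg hc]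
      have : max (Real.log (a n * r ^ n)) 0 = 0 := by
        apply max_eq_right
        exact Real.log_nonpos (mul_nonneg (ha n) (pow_nonneg (le_of_lt hr) n))
          (le_of_lt (not_le.mp hc))
      rw [this]
      simp only [mul_zero, sub_zero]
      exact le_max_right _ _
  have hsum : ∑' n, (f n - 2 * γ * g n) ≤ ∑' n, f' n := by
    apply Summable.tsum_le_tsum hpt (hsf.sub (hsg.mul_left (2 * γ))) hsf'
  rw [Summable.tsum_sub hsf (hsg.mul_left (2 * γ)), tsum_mul_left] at hsum
  rw [hS, hS, hm]
  linarith
end
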